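/- arXiv:2406.00585 — 4 statements merged into one kernel-verified Lean document; each statement's English description precedes it below -/
import Mathlib

section
/- For all integers s, t ≥ 3 with s even and t even, the toroidal grid T_{s,t} = C_s □ C_t satisfies mbt(T_{s,t}) = 4; that is, T_{s,t} is dispersable. -/
open SimpleGraph

/-- Two chords of a circle, given by positions of their endpoints along the circle,
cross: their endpoint pairs interleave. -/
def chordsCross (a b c d : ℕ) : Prop :=
  (min a b < min c d ∧ min c d < max a b ∧ max a b < max c d) ∨
  (min c d < min a b ∧ min a b < max c d ∧ max c d < max a b)

/-- Two edges cross with respect to a position function `f` on the vertices. -/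
def edgesCross {V : Type*} (f : V → ℕ) (e e' : Sym2 V) : Prop :=
  ∃ a b c d, e = s(a, b) ∧ e' = s(c, d) ∧ chordsCross (f a) (f b) (f c) (f d)

/-- `(f, c)` is a matching book embedding of `G`: the edge coloring `c` is proper and
edges that cross in the cyclic ordering given by `f` receive distinct colors. -/
def IsMBE {V : Type*} [Fintype V] (G : SimpleGraph V)
    (f : V ≃ Fin (Fintype.card V)) {m : ℕ} (c : G.edgeSet → Fin m) : Prop :=
  (∀ e₁ e₂ : G.edgeSet, e₁ ≠ e₂ → (∃ v, v ∈ (e₁ : Sym2 V) ∧ v ∈ (e₂ : Sym2 V)) →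
      c e₁ ≠ c e₂) ∧
  (∀ e₁ e₂ : G.edgeSet,
      edgesCross (fun v => (f v : ℕ)) (e₁ : Sym2 V) (e₂ : Sym2 V) → c e₁ ≠ c e₂)

/-- `G` has an `m`-page matching book embedding. -/
def HasMBE {V : Type*} [Fintype V] (G : SimpleGraph V) (m : ℕ) : Prop :=
  ∃ (f : V ≃ Fin (Fintype.card V)) (c : G.edgeSet → Fin m), IsMBE G f c

/-- The matching book thickness of `G`. -/
noncomputable def mbt {V : Type*} [Fintype V] (G : SimpleGraph V) : ℕ :=
  sInf {m | HasMBE G m}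

/-- The toroidal grid `T_{s,t} = C_s □ C_t`. -/
def toroidalGrid (s t : ℕ) : SimpleGraph (Fin s × Fin t) :=
  (cycleGraph s) □ (cycleGraph t)

namespace TGProof

/-! ### cycle adjacency over ℕ -/

def NAdj (n a b : ℕ) : Prop := a+1 = b ∨ b+1 = a ∨ (a = 0 ∧ b = n-1) ∨ (b = 0 ∧ a = n-1)

lemma NAdj_ne {n a b : ℕ} (hn : 3 ≤ n) (ha : a < n) (hb : b < n) (h : NAdj n a b) : a ≠ b := by
  unfold NAdj at h; omega

lemma cycle_adj_iff {n : ℕ} (hn : 3 ≤ n) {u v : Fin n} :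
    (cycleGraph n).Adj u v ↔ NAdj n u.val v.val := by
  have key : ∀ a b : ℕ, a < n → b < n → ((n - b + a) % n = 1 ↔ (b + 1 = a ∨ (a = 0 ∧ b = n - 1))) := by
    intro a b ha hb
    rcases Nat.lt_or_ge (n - b + a) n with h | h
    · rw [Nat.mod_eq_of_lt h]; omega
    · rw [Nat.mod_eq_sub_mod h, Nat.mod_eq_of_lt (by omega)]; omega
  rw [SimpleGraph.cycleGraph_adj']
  simp only [Fin.sub_def, Fin.val_mk]
  rw [key _ _ u.isLt v.isLt, key _ _ v.isLt u.isLt]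
  unfold NAdj
  tauto

lemma tg_adj {s t : ℕ} (hs : 3 ≤ s) (ht : 3 ≤ t) {u v : Fin s × Fin t} :
    (toroidalGrid s t).Adj u v ↔
      (NAdj s u.1.val v.1.val ∧ u.2 = v.2) ∨ (u.1 = v.1 ∧ NAdj t u.2.val v.2.val) := by
  rw [toroidalGrid, SimpleGraph.boxProd_adj, cycle_adj_iff hs, cycle_adj_iff ht]; tauto

/-! ### the layout -/

def q (t i j : ℕ) : ℕ := if i % 2 = 0 then j else t - 1 - j

def pos {s : ℕ} (t : ℕ) (p : Fin s × Fin t) : ℕ := t * p.1.val + q t p.1.val p.2.val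

def layoutAux (s t : ℕ) : Fin s × Fin t → Fin s × Fin t :=
  fun p => (p.1, if (p.1 : ℕ) % 2 = 0 then p.2 else p.2.rev)

lemma layoutAux_invol (s t : ℕ) : Function.Involutive (layoutAux s t) := by
  intro p
  by_cases h : (p.1 : ℕ) % 2 = 0 <;> simp [layoutAux, h, Fin.rev_rev]

def layout (s t : ℕ) : (Fin s × Fin t) ≃ Fin (Fintype.card (Fin s × Fin t)) :=
  (Function.Involutive.toPerm _ (layoutAux_invol s t)).trans
    (finProdFinEquiv.trans (finCongr (by simp)))

lemma layout_val {s t : ℕ} (p : Fin s × Fin t) :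
    ((layout s t p : Fin (Fintype.card (Fin s × Fin t))) : ℕ) = pos t p := by
  unfold layout pos q layoutAux
  by_cases h : (p.1 : ℕ) % 2 = 0 <;>
    · simp [finProdFinEquiv, Function.Involutive.toPerm, h, Fin.val_rev]
      omega

/-! ### the coloring -/

def vcol (x y : ℕ) : Fin 4 :=
  if x + 1 = y then (if x % 2 = 0 then 0 else 1)
  else if y + 1 = x then (if y % 2 = 0 then 0 else 1) else 1

def hcol (x y : ℕ) : Fin 4 :=
  if x + 1 = y then (if x % 2 = 0 then 2 else 3)
  else if y + 1 = x then (if y % 2 = 0 then 2 else 3) else 3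

lemma vcol_comm (x y : ℕ) : vcol x y = vcol y x := by
  unfold vcol; split_ifs <;> first | rfl | omega

lemma hcol_comm (x y : ℕ) : hcol x y = hcol y x := by
  unfold hcol; split_ifs <;> first | rfl | omega

lemma vcol_ne_hcol (x y z w : ℕ) : vcol x y ≠ hcol z w := by
  unfold vcol hcol; split_ifs <;> decide

lemma vcol_proper {s : ℕ} (hs : 4 ≤ s) (hse : s % 2 = 0) {a b c : ℕ}
    (ha : a < s) (hb : b < s) (hc : c < s)
    (h1 : NAdj s a b) (h2 : NAdj s a c) (hbc : b ≠ c) : vcol a b ≠ vcol a c := by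
  unfold NAdj at h1 h2; unfold vcol
  split_ifs <;> first | decide | omega

lemma hcol_proper {t : ℕ} (ht : 4 ≤ t) (hte : t % 2 = 0) {a b c : ℕ}
    (ha : a < t) (hb : b < t) (hc : c < t)
    (h1 : NAdj t a b) (h2 : NAdj t a c) (hbc : b ≠ c) : hcol a b ≠ hcol a c := by
  unfold NAdj at h1 h2; unfold hcol
  split_ifs <;> first | decide | omega

def col {s t : ℕ} (u v : Fin s × Fin t) : Fin 4 :=
  if u.1 = v.1 then hcol u.2.val v.2.val else vcol u.1.val v.1.val

lemma col_comm {s t : ℕ} (u v : Fin s × Fin t) : col u v = col v u := by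
  unfold col
  by_cases h : u.1 = v.1
  · rw [if_pos h, if_pos h.symm, hcol_comm]
  · rw [if_neg h, if_neg (Ne.symm h), vcol_comm]

def colS {s t : ℕ} : Sym2 (Fin s × Fin t) → Fin 4 :=
  Sym2.lift ⟨fun u v => col u v, fun u v => col_comm u v⟩

lemma colS_mk {s t : ℕ} (u v : Fin s × Fin t) : colS s(u, v) = col u v := rfl

/-! ### properness -/

lemma prop_core {s t : ℕ} (hs : 4 ≤ s) (ht : 4 ≤ t) (hse : s % 2 = 0) (hte : t % 2 = 0)
    {z v x : Fin s × Fin t} (h1 : (toroidalGrid s t).Adj z v) (h2 : (toroidalGrid s t).Adj z x)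
    (hvx : v ≠ x) : col z v ≠ col z x := by
  rw [tg_adj (by omega) (by omega)] at h1 h2
  unfold col
  rcases h1 with ⟨ha1, hc1⟩ | ⟨hr1, ha1⟩ <;> rcases h2 with ⟨ha2, hc2⟩ | ⟨hr2, ha2⟩
  · rw [if_neg (fun h => NAdj_ne (by omega) z.1.isLt v.1.isLt ha1 (congrArg Fin.val h)),
        if_neg (fun h => NAdj_ne (by omega) z.1.isLt x.1.isLt ha2 (congrArg Fin.val h))]
    refine vcol_proper hs hse z.1.isLt v.1.isLt x.1.isLt ha1 ha2 (fun h => hvx ?_)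
    exact Prod.ext (Fin.ext h) (hc1.symm.trans hc2)
  · rw [if_neg (fun h => NAdj_ne (by omega) z.1.isLt v.1.isLt ha1 (congrArg Fin.val h)),
        if_pos hr2]
    exact vcol_ne_hcol _ _ _ _
  · rw [if_pos hr1, if_neg (fun h => NAdj_ne (by omega) z.1.isLt x.1.isLt ha2 (congrArg Fin.val h))]
    exact (vcol_ne_hcol _ _ _ _).symm
  · rw [if_pos hr1, if_pos hr2]
    refine hcol_proper ht hte z.2.isLt v.2.isLt x.2.isLt ha1 ha2 (fun h => hvx ?_)
    exact Prod.ext (hr1.symm.trans hr2) (Fin.ext h)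

/-! ### non-crossing -/

lemma no_cross' {a b c d L1 R1 L2 R2 : ℕ}
    (h1 : (a = L1 ∧ b = R1) ∨ (b = L1 ∧ a = R1))
    (h2 : (c = L2 ∧ d = R2) ∨ (d = L2 ∧ c = R2))
    (hr1 : L1 ≤ R1) (hr2 : L2 ≤ R2)
    (h : R1 < L2 ∨ R2 < L1 ∨ (L1 ≤ L2 ∧ R2 ≤ R1) ∨ (L2 ≤ L1 ∧ R1 ≤ R2)) :
    ¬ chordsCross a b c d := by
  unfold chordsCross
  rcases h1 with ⟨rfl, rfl⟩ | ⟨rfl, rfl⟩ <;> rcases h2 with ⟨rfl, rfl⟩ | ⟨rfl, rfl⟩ <;>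
    simp only [Nat.min_def, Nat.max_def] <;> split_ifs <;> omega

lemma no_cross_short {a b c d p : ℕ}
    (h1 : (a = p ∧ b = p+1) ∨ (b = p ∧ a = p+1)) : ¬ chordsCross a b c d := by
  unfold chordsCross
  rcases h1 with ⟨rfl, rfl⟩ | ⟨rfl, rfl⟩ <;>
    simp only [Nat.min_def, Nat.max_def] <;> split_ifs <;> omega

lemma chordsCross_comm {a b c d : ℕ} : chordsCross a b c d ↔ chordsCross c d a b := by
  unfold chordsCross; tauto

lemma vedge_cases {s t : ℕ} (hs : 4 ≤ s) (ht : 4 ≤ t) (hse : s % 2 = 0)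
    {r1 r2 j : ℕ} (hr1 : r1 < s) (hr2 : r2 < s) (hj : j < t) (h : NAdj s r1 r2) :
    (∃ x, x % 2 = 0 ∧ x + 1 < s ∧ vcol r1 r2 = 0 ∧
      ((t*r1 + q t r1 j = t*x + j ∧ t*r2 + q t r2 j = t*x + t + (t-1-j)) ∨
       (t*r2 + q t r2 j = t*x + j ∧ t*r1 + q t r1 j = t*x + t + (t-1-j)))) ∨
    (∃ x, x % 2 = 1 ∧ x + 1 < s ∧ vcol r1 r2 = 1 ∧
      ((t*r1 + q t r1 j = t*x + (t-1-j) ∧ t*r2 + q t r2 j = t*x + t + j) ∨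
       (t*r2 + q t r2 j = t*x + (t-1-j) ∧ t*r1 + q t r1 j = t*x + t + j))) ∨
    (vcol r1 r2 = 1 ∧
      ((t*r1 + q t r1 j = j ∧ t*r2 + q t r2 j = t*(s-1) + (t-1-j)) ∨
       (t*r2 + q t r2 j = j ∧ t*r1 + q t r1 j = t*(s-1) + (t-1-j)))) := by
  have hmul : t * (r1 + 1) = t * r1 + t := by rw [Nat.mul_add]; omega
  have hmul2 : t * (r2 + 1) = t * r2 + t := by rw [Nat.mul_add]; omega
  rcases h with h | h | ⟨h0, h1⟩ | ⟨h0, h1⟩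
  · rcases Nat.mod_two_eq_zero_or_one r1 with p | p
    · refine Or.inl ⟨r1, p, by omega, ?_, Or.inl ⟨?_, ?_⟩⟩
      · unfold vcol; rw [if_pos h, if_pos p]
      · unfold q; rw [if_pos p]
      · unfold q; rw [← h, if_neg (by omega), hmul]
    · refine Or.inr (Or.inl ⟨r1, p, by omega, ?_, Or.inl ⟨?_, ?_⟩⟩)
      · unfold vcol; rw [if_pos h, if_neg (by omega)]
      · unfold q; rw [if_neg (by omega)]
      · unfold q; rw [← h, if_pos (by omega), hmul]
  · rcases Nat.mod_two_eq_zero_or_one r2 with p | p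
    · refine Or.inl ⟨r2, p, by omega, ?_, Or.inr ⟨?_, ?_⟩⟩
      · unfold vcol; rw [if_neg (by omega), if_pos h, if_pos p]
      · unfold q; rw [if_pos p]
      · unfold q; rw [← h, if_neg (by omega), hmul2]
    · refine Or.inr (Or.inl ⟨r2, p, by omega, ?_, Or.inr ⟨?_, ?_⟩⟩)
      · unfold vcol; rw [if_neg (by omega), if_pos h, if_neg (by omega)]
      · unfold q; rw [if_neg (by omega)]
      · unfold q; rw [← h, if_pos (by omega), hmul2]
  · refine Or.inr (Or.inr ⟨?_, Or.inl ⟨?_, ?_⟩⟩)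
    · unfold vcol; rw [if_neg (by omega), if_neg (by omega)]
    · unfold q; rw [h0, if_pos (by omega)]; omega
    · unfold q; rw [h1, if_neg (by omega)]
  · refine Or.inr (Or.inr ⟨?_, Or.inr ⟨?_, ?_⟩⟩)
    · unfold vcol; rw [if_neg (by omega), if_neg (by omega)]
    · unfold q; rw [h0, if_pos (by omega)]; omega
    · unfold q; rw [h1, if_neg (by omega)]

lemma hedge_cases {s t : ℕ} (hs : 4 ≤ s) (ht : 4 ≤ t)
    {i y z : ℕ} (hi : i < s) (hy : y < t) (hz : z < t) (h : NAdj t y z) :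
    (∃ p, (t*i + q t i y = p ∧ t*i + q t i z = p+1) ∨
          (t*i + q t i z = p ∧ t*i + q t i y = p+1)) ∨
    ((t*i + q t i y = t*i ∧ t*i + q t i z = t*i + (t-1)) ∨
     (t*i + q t i z = t*i ∧ t*i + q t i y = t*i + (t-1))) := by
  rcases Nat.mod_two_eq_zero_or_one i with p | p <;>
  rcases h with h | h | ⟨h0, h1⟩ | ⟨h0, h1⟩
  · exact Or.inl ⟨t*i + y, Or.inl ⟨by unfold q; rw [if_pos p], by unfold q; rw [if_pos p]; omega⟩⟩
  · exact Or.inl ⟨t*i + z, Or.inr ⟨by unfold q; rw [if_pos p], by unfold q; rw [if_pos p]; omega⟩⟩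
  · refine Or.inr (Or.inl ⟨?_, ?_⟩) <;> unfold q <;> rw [if_pos p] <;> omega
  · refine Or.inr (Or.inr ⟨?_, ?_⟩) <;> unfold q <;> rw [if_pos p] <;> omega
  · exact Or.inl ⟨t*i + (t-1-z), Or.inr ⟨by unfold q; rw [if_neg (by omega)],
      by unfold q; rw [if_neg (by omega)]; omega⟩⟩
  · exact Or.inl ⟨t*i + (t-1-y), Or.inl ⟨by unfold q; rw [if_neg (by omega)],
      by unfold q; rw [if_neg (by omega)]; omega⟩⟩
  · refine Or.inr (Or.inr ⟨?_, ?_⟩) <;> unfold q <;> rw [if_neg (by omega)] <;> omega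
  · refine Or.inr (Or.inl ⟨?_, ?_⟩) <;> unfold q <;> rw [if_neg (by omega)] <;> omega

lemma vv_nocross {s t : ℕ} (hs : 4 ≤ s) (ht : 4 ≤ t) (hse : s % 2 = 0)
    {r1 r2 r3 r4 j j' : ℕ} (hr1 : r1 < s) (hr2 : r2 < s) (hr3 : r3 < s) (hr4 : r4 < s)
    (hj : j < t) (hj' : j' < t) (h12 : NAdj s r1 r2) (h34 : NAdj s r3 r4)
    (hc : vcol r1 r2 = vcol r3 r4) :
    ¬ chordsCross (t*r1 + q t r1 j) (t*r2 + q t r2 j) (t*r3 + q t r3 j') (t*r4 + q t r4 j') := by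
  rcases vedge_cases hs ht hse hr1 hr2 hj h12 with
      ⟨a, pa, ha, hcA, hA⟩ | ⟨a, pa, ha, hcA, hA⟩ | ⟨hcA, hA⟩ <;>
    rcases vedge_cases hs ht hse hr3 hr4 hj' h34 with
      ⟨b, pb, hb, hcB, hB⟩ | ⟨b, pb, hb, hcB, hB⟩ | ⟨hcB, hB⟩ <;>
    rw [hcA, hcB] at hc
  · rcases Nat.lt_trichotomy a b with hab | rfl | hab
    · have key : t*a + t*2 ≤ t*b := by
        have := Nat.mul_le_mul (le_refl t) (show a+2 ≤ b by omega); rwa [Nat.mul_add] at this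
      exact no_cross' hA hB (by omega) (by omega) (by omega)
    · exact no_cross' hA hB (by omega) (by omega) (by omega)
    · have key : t*b + t*2 ≤ t*a := by
        have := Nat.mul_le_mul (le_refl t) (show b+2 ≤ a by omega); rwa [Nat.mul_add] at this
      exact no_cross' hA hB (by omega) (by omega) (by omega)
  · exact absurd hc (by decide)
  · exact absurd hc (by decide)
  · exact absurd hc (by decide)
  · rcases Nat.lt_trichotomy a b with hab | rfl | hab
    · have key : t*a + t*2 ≤ t*b := by
        have := Nat.mul_le_mul (le_refl t) (show a+2 ≤ b by omega); rwa [Nat.mul_add] at this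
      exact no_cross' hA hB (by omega) (by omega) (by omega)
    · exact no_cross' hA hB (by omega) (by omega) (by omega)
    · have key : t*b + t*2 ≤ t*a := by
        have := Nat.mul_le_mul (le_refl t) (show b+2 ≤ a by omega); rwa [Nat.mul_add] at this
      exact no_cross' hA hB (by omega) (by omega) (by omega)
  · have k1 : t*1 ≤ t*a := Nat.mul_le_mul (le_refl t) (by omega)
    have k2 : t*a + t*2 ≤ t*(s-1) := by
      have := Nat.mul_le_mul (le_refl t) (show a+2 ≤ s-1 by omega); rwa [Nat.mul_add] at this
    exact no_cross' hA hB (by omega) (by omega) (by omega)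
  · exact absurd hc (by decide)
  · have k1 : t*1 ≤ t*b := Nat.mul_le_mul (le_refl t) (by omega)
    have k2 : t*b + t*2 ≤ t*(s-1) := by
      have := Nat.mul_le_mul (le_refl t) (show b+2 ≤ s-1 by omega); rwa [Nat.mul_add] at this
    exact no_cross' hA hB (by omega) (by omega) (by omega)
  · have k1 : t*1 ≤ t*(s-1) := Nat.mul_le_mul (le_refl t) (by omega)
    exact no_cross' hA hB (by omega) (by omega) (by omega)

lemma hh_nocross {s t : ℕ} (hs : 4 ≤ s) (ht : 4 ≤ t)
    {i i' y z y' z' : ℕ} (hi : i < s) (hi' : i' < s)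
    (hy : y < t) (hz : z < t) (hy' : y' < t) (hz' : z' < t)
    (h1 : NAdj t y z) (h2 : NAdj t y' z') :
    ¬ chordsCross (t*i + q t i y) (t*i + q t i z) (t*i' + q t i' y') (t*i' + q t i' z') := by
  rcases hedge_cases hs ht hi hy hz h1 with ⟨p, hA⟩ | hA
  · exact no_cross_short hA
  · rcases hedge_cases hs ht hi' hy' hz' h2 with ⟨p, hB⟩ | hB
    · rw [chordsCross_comm]; exact no_cross_short hB
    · rcases Nat.lt_trichotomy i i' with hab | rfl | hab
      · have key : t*i + t*1 ≤ t*i' := by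
          have := Nat.mul_le_mul (le_refl t) (show i+1 ≤ i' by omega); rwa [Nat.mul_add] at this
        exact no_cross' hA hB (by omega) (by omega) (by omega)
      · exact no_cross' hA hB (by omega) (by omega) (by omega)
      · have key : t*i' + t*1 ≤ t*i := by
          have := Nat.mul_le_mul (le_refl t) (show i'+1 ≤ i by omega); rwa [Nat.mul_add] at this
        exact no_cross' hA hB (by omega) (by omega) (by omega)

lemma cross_core {s t : ℕ} (hs : 4 ≤ s) (ht : 4 ≤ t) (hse : s % 2 = 0)
    {u v w x : Fin s × Fin t} (h1 : (toroidalGrid s t).Adj u v) (h2 : (toroidalGrid s t).Adj w x)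
    (hc : col u v = col w x) :
    ¬ chordsCross (pos t u) (pos t v) (pos t w) (pos t x) := by
  rw [tg_adj (by omega) (by omega)] at h1 h2
  unfold pos
  rcases h1 with ⟨ha1, hc1⟩ | ⟨hr1, ha1⟩ <;> rcases h2 with ⟨ha2, hc2⟩ | ⟨hr2, ha2⟩
  · have hc' : vcol u.1.val v.1.val = vcol w.1.val x.1.val := by
      unfold col at hc
      rwa [if_neg (fun h => NAdj_ne (by omega) u.1.isLt v.1.isLt ha1 (congrArg Fin.val h)),
           if_neg (fun h => NAdj_ne (by omega) w.1.isLt x.1.isLt ha2 (congrArg Fin.val h))] at hc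
    rw [← hc1, ← hc2]
    exact vv_nocross hs ht hse u.1.isLt v.1.isLt w.1.isLt x.1.isLt u.2.isLt w.2.isLt ha1 ha2 hc'
  · exfalso
    unfold col at hc
    rw [if_neg (fun h => NAdj_ne (by omega) u.1.isLt v.1.isLt ha1 (congrArg Fin.val h)),
        if_pos hr2] at hc
    exact vcol_ne_hcol _ _ _ _ hc
  · exfalso
    unfold col at hc
    rw [if_pos hr1,
        if_neg (fun h => NAdj_ne (by omega) w.1.isLt x.1.isLt ha2 (congrArg Fin.val h))] at hc
    exact vcol_ne_hcol _ _ _ _ hc.symm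
  · rw [← hr1, ← hr2]
    exact hh_nocross hs ht u.1.isLt w.1.isLt u.2.isLt v.2.isLt w.2.isLt x.2.isLt ha1 ha2

lemma edge_repr {α : Type*} (e : Sym2 α) : ∃ u v, e = s(u, v) := by
  induction e using Sym2.ind with
  | _ u v => exact ⟨u, v, rfl⟩

end TGProof
namespace TGProof

lemma hasMBE4 {s t : ℕ} (hs : 4 ≤ s) (ht : 4 ≤ t) (hse : s % 2 = 0) (hte : t % 2 = 0) :
    HasMBE (toroidalGrid s t) 4 := by
  refine ⟨layout s t, fun e => colS e.val, ?_, ?_⟩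
  · intro e₁ e₂ hne ⟨z, hz1, hz2⟩
    obtain ⟨u, w, hu⟩ := edge_repr (e₁ : Sym2 (Fin s × Fin t))
    obtain ⟨p, r, hp⟩ := edge_repr (e₂ : Sym2 (Fin s × Fin t))
    have hadj1 : (toroidalGrid s t).Adj u w := by
      have := e₁.property; rw [hu] at this; exact this
    have hadj2 : (toroidalGrid s t).Adj p r := by
      have := e₂.property; rw [hp] at this; exact this
    have hvalne : s(u, w) ≠ s(p, r) := by
      rw [← hu, ← hp]; exact fun h => hne (Subtype.ext h)
    show colS (e₁ : Sym2 (Fin s × Fin t)) ≠ colS (e₂ : Sym2 (Fin s × Fin t))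
    rw [hu, hp, colS_mk, colS_mk]
    rw [hu] at hz1; rw [hp] at hz2
    rw [Sym2.mem_iff] at hz1 hz2
    rcases hz1 with rfl | rfl <;> rcases hz2 with rfl | rfl
    · exact prop_core hs ht hse hte hadj1 hadj2 (fun h => hvalne (by rw [h]))
    · rw [col_comm p z]
      exact prop_core hs ht hse hte hadj1 hadj2.symm
        (fun h => hvalne (by rw [h]; exact Sym2.eq_swap))
    · rw [col_comm u z]
      exact prop_core hs ht hse hte hadj1.symm hadj2
        (fun h => hvalne (by rw [h]; exact Sym2.eq_swap))
    · rw [col_comm u z, col_comm p z]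
      exact prop_core hs ht hse hte hadj1.symm hadj2.symm (fun h => hvalne (by rw [h]))
  · intro e₁ e₂ hcr
    obtain ⟨a, b, cc, d, h1, h2, hcc⟩ := hcr
    have hadj1 : (toroidalGrid s t).Adj a b := by
      have := e₁.property; rw [h1] at this; exact this
    have hadj2 : (toroidalGrid s t).Adj cc d := by
      have := e₂.property; rw [h2] at this; exact this
    show colS (e₁ : Sym2 (Fin s × Fin t)) ≠ colS (e₂ : Sym2 (Fin s × Fin t))
    rw [h1, h2, colS_mk, colS_mk]
    intro hceq
    simp only [layout_val] at hcc
    exact cross_core hs ht hse hadj1 hadj2 hceq hcc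

lemma lb {s t : ℕ} (hs : 4 ≤ s) (ht : 4 ≤ t) {m : ℕ}
    (h : HasMBE (toroidalGrid s t) m) : 4 ≤ m := by
  obtain ⟨f, c, hprop, -⟩ := h
  have h0s : 0 < s := by omega
  have h0t : 0 < t := by omega
  set z : Fin s × Fin t := (⟨0, by omega⟩, ⟨0, by omega⟩) with hz
  set n1 : Fin s × Fin t := (⟨1, by omega⟩, ⟨0, by omega⟩) with hn1
  set n2 : Fin s × Fin t := (⟨s-1, by omega⟩, ⟨0, by omega⟩) with hn2
  set n3 : Fin s × Fin t := (⟨0, by omega⟩, ⟨1, by omega⟩) with hn3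
  set n4 : Fin s × Fin t := (⟨0, by omega⟩, ⟨t-1, by omega⟩) with hn4
  have adj1 : (toroidalGrid s t).Adj z n1 := by
    rw [tg_adj (by omega) (by omega)]; exact Or.inl ⟨Or.inl rfl, rfl⟩
  have adj2 : (toroidalGrid s t).Adj z n2 := by
    rw [tg_adj (by omega) (by omega)]; exact Or.inl ⟨Or.inr (Or.inr (Or.inl ⟨rfl, rfl⟩)), rfl⟩
  have adj3 : (toroidalGrid s t).Adj z n3 := by
    rw [tg_adj (by omega) (by omega)]; exact Or.inr ⟨rfl, Or.inl rfl⟩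
  have adj4 : (toroidalGrid s t).Adj z n4 := by
    rw [tg_adj (by omega) (by omega)]; exact Or.inr ⟨rfl, Or.inr (Or.inr (Or.inl ⟨rfl, rfl⟩))⟩
  let E1 : (toroidalGrid s t).edgeSet := ⟨s(z, n1), (SimpleGraph.mem_edgeSet _).mpr adj1⟩
  let E2 : (toroidalGrid s t).edgeSet := ⟨s(z, n2), (SimpleGraph.mem_edgeSet _).mpr adj2⟩
  let E3 : (toroidalGrid s t).edgeSet := ⟨s(z, n3), (SimpleGraph.mem_edgeSet _).mpr adj3⟩
  let E4 : (toroidalGrid s t).edgeSet := ⟨s(z, n4), (SimpleGraph.mem_edgeSet _).mpr adj4⟩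
  have hEne : ∀ (a b : Fin s × Fin t), a ≠ b → s(z, a) ≠ s(z, b) := by
    intro a b hab hEq
    rw [Sym2.eq_iff] at hEq
    rcases hEq with ⟨-, h2⟩ | ⟨h1, h2⟩
    · exact hab h2
    · exact hab (h2.symm ▸ h1.symm ▸ rfl)
  have hd : ∀ (a b : Fin s × Fin t), a ≠ b →
      (ha : (toroidalGrid s t).Adj z a) → (hb : (toroidalGrid s t).Adj z b) →
      c ⟨s(z, a), (SimpleGraph.mem_edgeSet _).mpr ha⟩ ≠
      c ⟨s(z, b), (SimpleGraph.mem_edgeSet _).mpr hb⟩ := by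
    intro a b hab ha hb
    refine hprop _ _ (fun hE => hEne a b hab (congrArg Subtype.val hE)) ?_
    exact ⟨z, (Sym2.mem_iff).mpr (Or.inl rfl), (Sym2.mem_iff).mpr (Or.inl rfl)⟩
  have ne12 : n1 ≠ n2 := by simp [hn1, hn2, Prod.ext_iff, Fin.ext_iff] <;> omega
  have ne13 : n1 ≠ n3 := by simp [hn1, hn3, Prod.ext_iff, Fin.ext_iff] <;> omega
  have ne14 : n1 ≠ n4 := by simp [hn1, hn4, Prod.ext_iff, Fin.ext_iff] <;> omega
  have ne23 : n2 ≠ n3 := by simp [hn2, hn3, Prod.ext_iff, Fin.ext_iff] <;> omega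
  have ne24 : n2 ≠ n4 := by simp [hn2, hn4, Prod.ext_iff, Fin.ext_iff] <;> omega
  have ne34 : n3 ≠ n4 := by simp [hn3, hn4, Prod.ext_iff, Fin.ext_iff] <;> omega
  have d12 : c E1 ≠ c E2 := hd _ _ ne12 adj1 adj2
  have d13 : c E1 ≠ c E3 := hd _ _ ne13 adj1 adj3
  have d14 : c E1 ≠ c E4 := hd _ _ ne14 adj1 adj4
  have d23 : c E2 ≠ c E3 := hd _ _ ne23 adj2 adj3
  have d24 : c E2 ≠ c E4 := hd _ _ ne24 adj2 adj4
  have d34 : c E3 ≠ c E4 := hd _ _ ne34 adj3 adj4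
  have key : ({c E1, c E2, c E3, c E4} : Finset (Fin m)).card = 4 := by
    rw [Finset.card_insert_of_notMem (by simp [d12, d13, d14]),
        Finset.card_insert_of_notMem (by simp [d23, d24]),
        Finset.card_insert_of_notMem (by simp [d34]),
        Finset.card_singleton]
  have hle := Finset.card_le_univ ({c E1, c E2, c E3, c E4} : Finset (Fin m))
  rw [key] at hle
  simpa using hle

end TGProof

theorem stmt4 (s t : ℕ) (hs : 3 ≤ s) (ht : 3 ≤ t) (hse : Even s) (hte : Even t) :
    mbt (toroidalGrid s t) = 4 := by
  have hs4 : 4 ≤ s := by rcases hse with ⟨k, hk⟩; omega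
  have ht4 : 4 ≤ t := by rcases hte with ⟨k, hk⟩; omega
  have hse' : s % 2 = 0 := by rcases hse with ⟨k, hk⟩; omega
  have hte' : t % 2 = 0 := by rcases hte with ⟨k, hk⟩; omega
  have hub := TGProof.hasMBE4 hs4 ht4 hse' hte'
  unfold mbt
  refine le_antisymm (Nat.sInf_le hub) (le_csInf ⟨4, hub⟩ ?_)
  intro m hm
  exact TGProof.lb hs4 ht4 hm
end

section
/- For all integers s, t ≥ 3 with s even and t odd, the toroidal grid T_{s,t} = C_s □ C_t satisfies mbt(T_{s,t}) ≤ 5. -/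
open SimpleGraph

namespace MBTAux

/-- position of a vertex around the circle -/
def posn (s t : ℕ) (v : Fin s × Fin t) : ℕ :=
  v.1.val * t + (if v.1.val % 2 = 0 then v.2.val else t - 1 - v.2.val)

/-- color of an edge, as a natural number -/
def coln (s t : ℕ) (u v : Fin s × Fin t) : ℕ :=
  if u.1 = v.1 then
    (if (min u.2.val v.2.val = 0 ∧ max u.2.val v.2.val = t - 1) then 4
     else 2 + (min u.2.val v.2.val) % 2)
  else
    (if (min u.1.val v.1.val = 0 ∧ max u.1.val v.1.val = s - 1) then 1
     else (min u.1.val v.1.val) % 2)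

lemma coln_symm (s t : ℕ) (u v : Fin s × Fin t) : coln s t u v = coln s t v u := by
  unfold coln
  rw [min_comm u.2.val, max_comm u.2.val, min_comm u.1.val, max_comm u.1.val]
  by_cases h : u.1 = v.1
  · rw [if_pos h, if_pos h.symm]
  · rw [if_neg h, if_neg (show ¬ v.1 = u.1 from fun e => h e.symm)]

lemma coln_lt (s t : ℕ) (u v : Fin s × Fin t) : coln s t u v < 5 := by
  unfold coln; split_ifs <;> omega

lemma posn_lt (s t : ℕ) (ht : 0 < t) (v : Fin s × Fin t) : posn s t v < s * t := by
  have h1 : v.1.val < s := v.1.isLt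
  have h2 : v.2.val < t := v.2.isLt
  have h3 : v.1.val * t + t ≤ s * t := by
    have : (v.1.val + 1) * t ≤ s * t := Nat.mul_le_mul_right t (by omega)
    have e : (v.1.val + 1) * t = v.1.val * t + t := by ring
    omega
  unfold posn; split_ifs <;> omega

lemma posn_inj (s t : ℕ) (ht : 0 < t) : Function.Injective (posn s t) := by
  intro a b h
  have h1 : a.1.val < s := a.1.isLt
  have h2 : a.2.val < t := a.2.isLt
  have h3 : b.1.val < s := b.1.isLt
  have h4 : b.2.val < t := b.2.isLt
  have key : a.1.val = b.1.val := by
    rcases Nat.lt_trichotomy a.1.val b.1.val with hlt | heq | hlt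
    · exfalso
      have : (a.1.val + 1) * t ≤ b.1.val * t := Nat.mul_le_mul_right t (by omega)
      have e : (a.1.val + 1) * t = a.1.val * t + t := by ring
      unfold posn at h; split_ifs at h <;> omega
    · exact heq
    · exfalso
      have : (b.1.val + 1) * t ≤ a.1.val * t := Nat.mul_le_mul_right t (by omega)
      have e : (b.1.val + 1) * t = b.1.val * t + t := by ring
      unfold posn at h; split_ifs at h <;> omega
  have key2 : a.2.val = b.2.val := by
    unfold posn at h; rw [key] at h; split_ifs at h <;> omega
  exact Prod.ext (Fin.ext key) (Fin.ext key2)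

/-- the vertex ordering -/
noncomputable def emb (s t : ℕ) (ht : 0 < t) :
    (Fin s × Fin t) ≃ Fin (Fintype.card (Fin s × Fin t)) :=
  (Equiv.ofBijective (fun v => (⟨posn s t v, posn_lt s t ht v⟩ : Fin (s * t)))
    ((Fintype.bijective_iff_injective_and_card _).mpr
      ⟨fun a b h => posn_inj s t ht (congrArg Fin.val h), by simp⟩)).trans
    (finCongr (by simp))

lemma emb_val (s t : ℕ) (ht : 0 < t) (v : Fin s × Fin t) :
    ((emb s t ht v : Fin (Fintype.card (Fin s × Fin t))) : ℕ) = posn s t v := rfl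

lemma cyc_nat {n : ℕ} (hn : 3 ≤ n) {a b : Fin n} (h : (cycleGraph n).Adj a b) :
    (a.val + 1 = b.val ∨ b.val + 1 = a.val ∨ (a.val = 0 ∧ b.val = n-1) ∨
      (b.val = 0 ∧ a.val = n-1)) := by
  rw [cycleGraph_adj'] at h
  have ha : a.val < n := a.isLt
  have hb : b.val < n := b.isLt
  rcases h with h | h
  · rw [Fin.sub_def] at h
    simp only at h
    rcases Nat.lt_or_ge (n - b.val + a.val) n with h1 | h1
    · rw [Nat.mod_eq_of_lt h1] at h; omega
    · rw [Nat.mod_eq_sub_mod h1, Nat.mod_eq_of_lt (by omega)] at h; omega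
  · rw [Fin.sub_def] at h
    simp only at h
    rcases Nat.lt_or_ge (n - a.val + b.val) n with h1 | h1
    · rw [Nat.mod_eq_of_lt h1] at h; omega
    · rw [Nat.mod_eq_sub_mod h1, Nat.mod_eq_of_lt (by omega)] at h; omega



lemma sym2_eq_vals {s t : ℕ} {a b c d : Fin s × Fin t}
    (h : (a.1.val = c.1.val ∧ a.2.val = c.2.val ∧ b.1.val = d.1.val ∧ b.2.val = d.2.val) ∨
         (a.1.val = d.1.val ∧ a.2.val = d.2.val ∧ b.1.val = c.1.val ∧ b.2.val = c.2.val)) :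
    s(a,b) = s(c,d) := by
  have pe : ∀ (x y : Fin s × Fin t), x.1.val = y.1.val → x.2.val = y.2.val → x = y :=
    fun x y h1 h2 => Prod.ext (Fin.ext h1) (Fin.ext h2)
  rcases h with ⟨h1,h2,h3,h4⟩ | ⟨h1,h2,h3,h4⟩
  · rw [pe a c h1 h2, pe b d h3 h4]
  · rw [pe a d h1 h2, pe b c h3 h4, Sym2.eq_swap]

lemma posn_eq (s t : ℕ) (w : Fin s × Fin t) (r j : ℕ) (h1 : w.1.val = r) (h2 : w.2.val = j) :
    posn s t w = r * t + (if r % 2 = 0 then j else t - 1 - j) := by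
  unfold posn; rw [h1, h2]

lemma edge_shape (s t : ℕ) (hs : 3 ≤ s) (ht : 3 ≤ t) (hse : s % 2 = 0) (hto : t % 2 = 1)
    (u v : Fin s × Fin t) (h : (toroidalGrid s t).Adj u v) :
    -- VD0 : vertical, lower row k even
    (∃ k j P, P = k * t ∧ k % 2 = 0 ∧ k + 2 ≤ s ∧ j < t ∧
      u.2.val = j ∧ v.2.val = j ∧
      ((u.1.val = k ∧ v.1.val = k+1) ∨ (u.1.val = k+1 ∧ v.1.val = k)) ∧
      coln s t u v = 0 ∧
      min (posn s t u) (posn s t v) = P + j ∧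
      max (posn s t u) (posn s t v) = P + 2*t - 1 - j) ∨
    -- VD1 : vertical, lower row k odd
    (∃ k j P, P = k * t ∧ k % 2 = 1 ∧ k + 2 ≤ s ∧ j < t ∧
      u.2.val = j ∧ v.2.val = j ∧
      ((u.1.val = k ∧ v.1.val = k+1) ∨ (u.1.val = k+1 ∧ v.1.val = k)) ∧
      coln s t u v = 1 ∧
      min (posn s t u) (posn s t v) = P + t - 1 - j ∧
      max (posn s t u) (posn s t v) = P + t + j) ∨
    -- VW : vertical wrap edge
    (∃ j ST, ST = s * t ∧ j < t ∧ u.2.val = j ∧ v.2.val = j ∧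
      ((u.1.val = 0 ∧ v.1.val = s-1) ∨ (u.1.val = s-1 ∧ v.1.val = 0)) ∧
      coln s t u v = 1 ∧
      min (posn s t u) (posn s t v) = j ∧
      max (posn s t u) (posn s t v) = ST - 1 - j) ∨
    -- HD : horizontal
    (∃ i m P p, P = i * t ∧ i < s ∧ m + 2 ≤ t ∧
      u.1.val = i ∧ v.1.val = i ∧
      ((u.2.val = m ∧ v.2.val = m+1) ∨ (u.2.val = m+1 ∧ v.2.val = m)) ∧
      coln s t u v = 2 + m % 2 ∧
      P ≤ p ∧ p + 1 ≤ P + t - 1 ∧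
      min (posn s t u) (posn s t v) = p ∧
      max (posn s t u) (posn s t v) = p + 1) ∨
    -- HW : horizontal wrap edge
    (∃ i P, P = i * t ∧ i < s ∧
      u.1.val = i ∧ v.1.val = i ∧
      ((u.2.val = 0 ∧ v.2.val = t-1) ∨ (u.2.val = t-1 ∧ v.2.val = 0)) ∧
      coln s t u v = 4 ∧
      min (posn s t u) (posn s t v) = P ∧
      max (posn s t u) (posn s t v) = P + t - 1) := by
  rw [toroidalGrid, boxProd_adj] at h
  have hu1 : u.1.val < s := u.1.isLt
  have hv1 : v.1.val < s := v.1.isLt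
  have hu2 : u.2.val < t := u.2.isLt
  have hv2 : v.2.val < t := v.2.isLt
  rcases h with ⟨hadj, hj⟩ | ⟨hadj, hi⟩
  · -- vertical edge
    have hjv : u.2.val = v.2.val := congrArg Fin.val hj
    have hne : ¬ (u.1 = v.1) := (cycleGraph s).ne_of_adj hadj
    have hcv : coln s t u v =
        (if (min u.1.val v.1.val = 0 ∧ max u.1.val v.1.val = s - 1) then 1
         else (min u.1.val v.1.val) % 2) := by
      unfold coln; rw [if_neg hne]
    rcases cyc_nat hs hadj with hc | hc | hc | hc
    · -- u.1 + 1 = v.1 : lower row k = u.1.val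
      set k := u.1.val with hk
      have hPu := posn_eq s t u k u.2.val rfl rfl
      have hPv := posn_eq s t v (k+1) u.2.val hc.symm hjv.symm
      have e : (k + 1) * t = k * t + t := by ring
      have hcol : coln s t u v = k % 2 := by
        rw [hcv, if_neg (by omega)]; congr 1; omega
      rcases Nat.mod_two_eq_zero_or_one k with hpar | hpar
      · exact Or.inl ⟨k, u.2.val, k * t, rfl, hpar, by omega, hu2, rfl, hjv.symm,
          Or.inl ⟨rfl, hc.symm⟩, by omega,
          by rw [hPu, hPv]; split_ifs <;> omega,
          by rw [hPu, hPv]; split_ifs <;> omega⟩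
      · exact Or.inr (Or.inl ⟨k, u.2.val, k * t, rfl, hpar, by omega, hu2, rfl, hjv.symm,
          Or.inl ⟨rfl, hc.symm⟩, by omega,
          by rw [hPu, hPv]; split_ifs <;> omega,
          by rw [hPu, hPv]; split_ifs <;> omega⟩)
    · -- v.1 + 1 = u.1 : lower row k = v.1.val
      set k := v.1.val with hk
      have hPv := posn_eq s t v k u.2.val rfl hjv.symm
      have hPu := posn_eq s t u (k+1) u.2.val hc.symm rfl
      have e : (k + 1) * t = k * t + t := by ring
      have hcol : coln s t u v = k % 2 := by
        rw [hcv, if_neg (by omega)]; congr 1; omega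
      rcases Nat.mod_two_eq_zero_or_one k with hpar | hpar
      · exact Or.inl ⟨k, u.2.val, k * t, rfl, hpar, by omega, hu2, rfl, hjv.symm,
          Or.inr ⟨hc.symm, rfl⟩, by omega,
          by rw [hPu, hPv]; split_ifs <;> omega,
          by rw [hPu, hPv]; split_ifs <;> omega⟩
      · exact Or.inr (Or.inl ⟨k, u.2.val, k * t, rfl, hpar, by omega, hu2, rfl, hjv.symm,
          Or.inr ⟨hc.symm, rfl⟩, by omega,
          by rw [hPu, hPv]; split_ifs <;> omega,
          by rw [hPu, hPv]; split_ifs <;> omega⟩)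
    · -- u.1 = 0, v.1 = s - 1
      have hPu := posn_eq s t u 0 u.2.val hc.1 rfl
      have hPv := posn_eq s t v (s-1) u.2.val hc.2 hjv.symm
      have e : (s - 1 + 1) * t = (s-1) * t + t := by ring
      have e2 : s - 1 + 1 = s := by omega
      have he : (s-1) * t + t = s * t := by rw [← e, e2]
      have h1 : ¬ ((s-1) % 2 = 0) := by omega
      refine Or.inr (Or.inr (Or.inl ⟨u.2.val, s * t, rfl, hu2, rfl, hjv.symm,
        Or.inl ⟨hc.1, hc.2⟩, ?_, ?_, ?_⟩))
      · rw [hcv, if_pos (by omega)]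
      · rw [hPu, hPv, if_pos (show (0:ℕ) % 2 = 0 from rfl), if_neg h1, Nat.zero_mul,
          Nat.zero_add]
        have hA2 : 2*t ≤ (s-1) * t := Nat.mul_le_mul_right t (by omega)
        generalize hA : (s-1) * t = A at he hA2 ⊢
        generalize hB : s * t = B at he ⊢
        omega
      · rw [hPu, hPv, if_pos (show (0:ℕ) % 2 = 0 from rfl), if_neg h1, Nat.zero_mul,
          Nat.zero_add]
        have hA2 : 2*t ≤ (s-1) * t := Nat.mul_le_mul_right t (by omega)
        generalize hA : (s-1) * t = A at he hA2 ⊢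
        generalize hB : s * t = B at he ⊢
        omega
    · -- v.1 = 0, u.1 = s - 1
      have hPv := posn_eq s t v 0 u.2.val hc.1 hjv.symm
      have hPu := posn_eq s t u (s-1) u.2.val hc.2 rfl
      have e : (s - 1 + 1) * t = (s-1) * t + t := by ring
      have e2 : s - 1 + 1 = s := by omega
      have he : (s-1) * t + t = s * t := by rw [← e, e2]
      have h1 : ¬ ((s-1) % 2 = 0) := by omega
      refine Or.inr (Or.inr (Or.inl ⟨u.2.val, s * t, rfl, hu2, rfl, hjv.symm,
        Or.inr ⟨hc.2, hc.1⟩, ?_, ?_, ?_⟩))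
      · rw [hcv, if_pos (by omega)]
      · rw [hPu, hPv, if_pos (show (0:ℕ) % 2 = 0 from rfl), if_neg h1, Nat.zero_mul,
          Nat.zero_add]
        have hA2 : 2*t ≤ (s-1) * t := Nat.mul_le_mul_right t (by omega)
        generalize hA : (s-1) * t = A at he hA2 ⊢
        generalize hB : s * t = B at he ⊢
        omega
      · rw [hPu, hPv, if_pos (show (0:ℕ) % 2 = 0 from rfl), if_neg h1, Nat.zero_mul,
          Nat.zero_add]
        have hA2 : 2*t ≤ (s-1) * t := Nat.mul_le_mul_right t (by omega)
        generalize hA : (s-1) * t = A at he hA2 ⊢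
        generalize hB : s * t = B at he ⊢
        omega
  · -- horizontal edge
    have hiv : u.1.val = v.1.val := congrArg Fin.val hi
    set i := u.1.val with hik
    have hcv : coln s t u v =
        (if (min u.2.val v.2.val = 0 ∧ max u.2.val v.2.val = t - 1) then 4
         else 2 + (min u.2.val v.2.val) % 2) := by
      unfold coln; rw [if_pos hi]
    have hPu := posn_eq s t u i u.2.val rfl rfl
    have hPv := posn_eq s t v i v.2.val hiv.symm rfl
    rcases cyc_nat ht hadj with hc | hc | hc | hc
    · -- u.2 + 1 = v.2 : m = u.2.val
      refine Or.inr (Or.inr (Or.inr (Or.inl ⟨i, u.2.val,  i * t,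
        (if i % 2 = 0 then i * t + u.2.val else i * t + (t - 2 - u.2.val)),
        rfl, hu1, by omega, rfl, hiv.symm, Or.inl ⟨rfl, hc.symm⟩, ?_, ?_, ?_, ?_, ?_⟩)))
      · rw [hcv, if_neg (by omega)]; congr 2; omega
      · split_ifs <;> omega
      · split_ifs <;> omega
      · rw [hPu, hPv]; split_ifs <;> omega
      · rw [hPu, hPv]; split_ifs <;> omega
    · -- v.2 + 1 = u.2 : m = v.2.val
      refine Or.inr (Or.inr (Or.inr (Or.inl ⟨i, v.2.val, i * t,
        (if i % 2 = 0 then i * t + v.2.val else i * t + (t - 2 - v.2.val)),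
        rfl, hu1, by omega, rfl, hiv.symm, Or.inr ⟨hc.symm, rfl⟩, ?_, ?_, ?_, ?_, ?_⟩)))
      · rw [hcv, if_neg (by omega)]; congr 2; omega
      · split_ifs <;> omega
      · split_ifs <;> omega
      · rw [hPu, hPv]; split_ifs <;> omega
      · rw [hPu, hPv]; split_ifs <;> omega
    · -- u.2 = 0, v.2 = t-1
      refine Or.inr (Or.inr (Or.inr (Or.inr ⟨i, i * t, rfl, hu1, rfl, hiv.symm,
        Or.inl ⟨hc.1, hc.2⟩, ?_, ?_, ?_⟩)))
      · rw [hcv, if_pos (by omega)]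
      · rw [hPu, hPv]; split_ifs <;> omega
      · rw [hPu, hPv]; split_ifs <;> omega
    · -- v.2 = 0, u.2 = t-1
      refine Or.inr (Or.inr (Or.inr (Or.inr ⟨i, i * t, rfl, hu1, rfl, hiv.symm,
        Or.inr ⟨hc.2, hc.1⟩, ?_, ?_, ?_⟩)))
      · rw [hcv, if_pos (by omega)]
      · rw [hPu, hPv]; split_ifs <;> omega
      · rw [hPu, hPv]; split_ifs <;> omega

set_option maxHeartbeats 1000000 in

lemma main_pair (s t : ℕ) (hs : 3 ≤ s) (ht : 3 ≤ t) (hse : s % 2 = 0) (hto : t % 2 = 1)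
    (u v u' v' : Fin s × Fin t) (h : (toroidalGrid s t).Adj u v)
    (h' : (toroidalGrid s t).Adj u' v')
    (hcol : coln s t u v = coln s t u' v') :
    ((u = u' ∨ u = v' ∨ v = u' ∨ v = v') → s(u,v) = s(u',v')) ∧
    ¬ chordsCross (posn s t u) (posn s t v) (posn s t u') (posn s t v') := by
  have D := edge_shape s t hs ht hse hto u v h
  have D' := edge_shape s t hs ht hse hto u' v' h'
  clear h h'
  rcases D with ⟨k,j,P,hP,hk,hks,hj,hu2,hv2,hrow,hc1,hmn,hmx⟩ | ⟨k,j,P,hP,hk,hks,hj,hu2,hv2,hrow,hc1,hmn,hmx⟩ | ⟨j,ST,hST,hj,hu2,hv2,hrow,hc1,hmn,hmx⟩ | ⟨i,m,P,p,hP,hi,hm,hu1,hv1,hrow,hc1,hp1,hp2,hmn,hmx⟩ | ⟨i,P,hP,hi,hu1,hv1,hrow,hc1,hmn,hmx⟩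
  · rcases D' with ⟨k',j',P',hP',hk',hks',hj',hu2',hv2',hrow',hc1',hmn',hmx'⟩ | ⟨k',j',P',hP',hk',hks',hj',hu2',hv2',hrow',hc1',hmn',hmx'⟩ | ⟨j',ST',hST',hj',hu2',hv2',hrow',hc1',hmn',hmx'⟩ | ⟨i',m',P',p',hP',hi',hm',hu1',hv1',hrow',hc1',hp1',hp2',hmn',hmx'⟩ | ⟨i',P',hP',hi',hu1',hv1',hrow',hc1',hmn',hmx'⟩
    · -- VD0 vs VD0
      refine ⟨fun hsh => ?_, fun hcr => ?_⟩
      · have hsh2 : (u.1.val = u'.1.val ∧ u.2.val = u'.2.val) ∨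
            (u.1.val = v'.1.val ∧ u.2.val = v'.2.val) ∨
            (v.1.val = u'.1.val ∧ v.2.val = u'.2.val) ∨
            (v.1.val = v'.1.val ∧ v.2.val = v'.2.val) := by
          rcases hsh with h0 | h0 | h0 | h0
          · exact Or.inl ⟨congrArg (fun x => x.1.val) h0, congrArg (fun x => x.2.val) h0⟩
          · exact Or.inr (Or.inl ⟨congrArg (fun x => x.1.val) h0, congrArg (fun x => x.2.val) h0⟩)
          · exact Or.inr (Or.inr (Or.inl ⟨congrArg (fun x => x.1.val) h0, congrArg (fun x => x.2.val) h0⟩))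
          · exact Or.inr (Or.inr (Or.inr ⟨congrArg (fun x => x.1.val) h0, congrArg (fun x => x.2.val) h0⟩))
        refine sym2_eq_vals ?_
        clear * - hsh2 hcol hc1 hc1' hs ht hse hto hrow hu2 hv2 hk hks hj hrow' hu2' hv2' hk' hks' hj'
        omega
      · unfold chordsCross at hcr
        rcases Nat.lt_trichotomy k k' with hl | hl | hl
        · have h1 : (k+2) * t ≤ k' * t := Nat.mul_le_mul_right t (by omega)
          have h3 : (k+2) * t = k * t + 2*t := by ring
          rw [h3, ← hP, ← hP'] at h1
          clear * - h1 hcr hs ht hse hto hmn hmx hj hks hk hmn' hmx' hj' hks' hk'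
          omega
        · have h4 : P = P' := by rw [hP, hP', hl]
          clear * - h4 hcr hs ht hse hto hmn hmx hj hks hk hmn' hmx' hj' hks' hk'
          omega
        · have h1 : (k'+2) * t ≤ k * t := Nat.mul_le_mul_right t (by omega)
          have h3 : (k'+2) * t = k' * t + 2*t := by ring
          rw [h3, ← hP', ← hP] at h1
          clear * - h1 hcr hs ht hse hto hmn hmx hj hks hk hmn' hmx' hj' hks' hk'
          omega
    · -- VD0 vs VD1
      refine absurd hcol ?_
      clear * - hc1 hc1'
      omega
    · -- VD0 vs VW
      refine absurd hcol ?_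
      clear * - hc1 hc1'
      omega
    · -- VD0 vs HD
      refine absurd hcol ?_
      clear * - hc1 hc1'
      omega
    · -- VD0 vs HW
      refine absurd hcol ?_
      clear * - hc1 hc1'
      omega
  · rcases D' with ⟨k',j',P',hP',hk',hks',hj',hu2',hv2',hrow',hc1',hmn',hmx'⟩ | ⟨k',j',P',hP',hk',hks',hj',hu2',hv2',hrow',hc1',hmn',hmx'⟩ | ⟨j',ST',hST',hj',hu2',hv2',hrow',hc1',hmn',hmx'⟩ | ⟨i',m',P',p',hP',hi',hm',hu1',hv1',hrow',hc1',hp1',hp2',hmn',hmx'⟩ | ⟨i',P',hP',hi',hu1',hv1',hrow',hc1',hmn',hmx'⟩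
    · -- VD1 vs VD0
      refine absurd hcol ?_
      clear * - hc1 hc1'
      omega
    · -- VD1 vs VD1
      refine ⟨fun hsh => ?_, fun hcr => ?_⟩
      · have hsh2 : (u.1.val = u'.1.val ∧ u.2.val = u'.2.val) ∨
            (u.1.val = v'.1.val ∧ u.2.val = v'.2.val) ∨
            (v.1.val = u'.1.val ∧ v.2.val = u'.2.val) ∨
            (v.1.val = v'.1.val ∧ v.2.val = v'.2.val) := by
          rcases hsh with h0 | h0 | h0 | h0
          · exact Or.inl ⟨congrArg (fun x => x.1.val) h0, congrArg (fun x => x.2.val) h0⟩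
          · exact Or.inr (Or.inl ⟨congrArg (fun x => x.1.val) h0, congrArg (fun x => x.2.val) h0⟩)
          · exact Or.inr (Or.inr (Or.inl ⟨congrArg (fun x => x.1.val) h0, congrArg (fun x => x.2.val) h0⟩))
          · exact Or.inr (Or.inr (Or.inr ⟨congrArg (fun x => x.1.val) h0, congrArg (fun x => x.2.val) h0⟩))
        refine sym2_eq_vals ?_
        clear * - hsh2 hcol hc1 hc1' hs ht hse hto hrow hu2 hv2 hk hks hj hrow' hu2' hv2' hk' hks' hj'
        omega
      · unfold chordsCross at hcr
        rcases Nat.lt_trichotomy k k' with hl | hl | hl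
        · have h1 : (k+2) * t ≤ k' * t := Nat.mul_le_mul_right t (by omega)
          have h3 : (k+2) * t = k * t + 2*t := by ring
          rw [h3, ← hP, ← hP'] at h1
          clear * - h1 hcr hs ht hse hto hmn hmx hj hks hk hmn' hmx' hj' hks' hk'
          omega
        · have h4 : P = P' := by rw [hP, hP', hl]
          clear * - h4 hcr hs ht hse hto hmn hmx hj hks hk hmn' hmx' hj' hks' hk'
          omega
        · have h1 : (k'+2) * t ≤ k * t := Nat.mul_le_mul_right t (by omega)
          have h3 : (k'+2) * t = k' * t + 2*t := by ring
          rw [h3, ← hP', ← hP] at h1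
          clear * - h1 hcr hs ht hse hto hmn hmx hj hks hk hmn' hmx' hj' hks' hk'
          omega
    · -- VD1 vs VW
      refine ⟨fun hsh => ?_, fun hcr => ?_⟩
      · have hsh2 : (u.1.val = u'.1.val ∧ u.2.val = u'.2.val) ∨
            (u.1.val = v'.1.val ∧ u.2.val = v'.2.val) ∨
            (v.1.val = u'.1.val ∧ v.2.val = u'.2.val) ∨
            (v.1.val = v'.1.val ∧ v.2.val = v'.2.val) := by
          rcases hsh with h0 | h0 | h0 | h0
          · exact Or.inl ⟨congrArg (fun x => x.1.val) h0, congrArg (fun x => x.2.val) h0⟩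
          · exact Or.inr (Or.inl ⟨congrArg (fun x => x.1.val) h0, congrArg (fun x => x.2.val) h0⟩)
          · exact Or.inr (Or.inr (Or.inl ⟨congrArg (fun x => x.1.val) h0, congrArg (fun x => x.2.val) h0⟩))
          · exact Or.inr (Or.inr (Or.inr ⟨congrArg (fun x => x.1.val) h0, congrArg (fun x => x.2.val) h0⟩))
        refine sym2_eq_vals ?_
        clear * - hsh2 hcol hc1 hc1' hs ht hse hto hrow hu2 hv2 hk hks hj hrow' hu2' hv2' hj'
        omega
      · unfold chordsCross at hcr
        have h4 : 1 * t ≤ k * t := Nat.mul_le_mul_right t (by omega)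
        rw [one_mul, ← hP] at h4
        have h5 : (k+3) * t ≤ s * t := Nat.mul_le_mul_right t (by omega)
        have h6 : (k+3) * t = k * t + 3*t := by ring
        rw [h6, ← hP, ← hST'] at h5
        clear * - h4 h5 hcr hs ht hse hto hmn hmx hj hks hk hmn' hmx' hj'
        omega
    · -- VD1 vs HD
      refine absurd hcol ?_
      clear * - hc1 hc1'
      omega
    · -- VD1 vs HW
      refine absurd hcol ?_
      clear * - hc1 hc1'
      omega
  · rcases D' with ⟨k',j',P',hP',hk',hks',hj',hu2',hv2',hrow',hc1',hmn',hmx'⟩ | ⟨k',j',P',hP',hk',hks',hj',hu2',hv2',hrow',hc1',hmn',hmx'⟩ | ⟨j',ST',hST',hj',hu2',hv2',hrow',hc1',hmn',hmx'⟩ | ⟨i',m',P',p',hP',hi',hm',hu1',hv1',hrow',hc1',hp1',hp2',hmn',hmx'⟩ | ⟨i',P',hP',hi',hu1',hv1',hrow',hc1',hmn',hmx'⟩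
    · -- VW vs VD0
      refine absurd hcol ?_
      clear * - hc1 hc1'
      omega
    · -- VW vs VD1
      refine ⟨fun hsh => ?_, fun hcr => ?_⟩
      · have hsh2 : (u.1.val = u'.1.val ∧ u.2.val = u'.2.val) ∨
            (u.1.val = v'.1.val ∧ u.2.val = v'.2.val) ∨
            (v.1.val = u'.1.val ∧ v.2.val = u'.2.val) ∨
            (v.1.val = v'.1.val ∧ v.2.val = v'.2.val) := by
          rcases hsh with h0 | h0 | h0 | h0
          · exact Or.inl ⟨congrArg (fun x => x.1.val) h0, congrArg (fun x => x.2.val) h0⟩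
          · exact Or.inr (Or.inl ⟨congrArg (fun x => x.1.val) h0, congrArg (fun x => x.2.val) h0⟩)
          · exact Or.inr (Or.inr (Or.inl ⟨congrArg (fun x => x.1.val) h0, congrArg (fun x => x.2.val) h0⟩))
          · exact Or.inr (Or.inr (Or.inr ⟨congrArg (fun x => x.1.val) h0, congrArg (fun x => x.2.val) h0⟩))
        refine sym2_eq_vals ?_
        clear * - hsh2 hcol hc1 hc1' hs ht hse hto hrow hu2 hv2 hj hrow' hu2' hv2' hk' hks' hj'
        omega
      · unfold chordsCross at hcr
        have h4 : 1 * t ≤ k' * t := Nat.mul_le_mul_right t (by omega)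
        rw [one_mul, ← hP'] at h4
        have h5 : (k'+3) * t ≤ s * t := Nat.mul_le_mul_right t (by omega)
        have h6 : (k'+3) * t = k' * t + 3*t := by ring
        rw [h6, ← hP', ← hST] at h5
        clear * - h4 h5 hcr hs ht hse hto hmn hmx hj hmn' hmx' hj' hks' hk'
        omega
    · -- VW vs VW
      refine ⟨fun hsh => ?_, fun hcr => ?_⟩
      · have hsh2 : (u.1.val = u'.1.val ∧ u.2.val = u'.2.val) ∨
            (u.1.val = v'.1.val ∧ u.2.val = v'.2.val) ∨
            (v.1.val = u'.1.val ∧ v.2.val = u'.2.val) ∨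
            (v.1.val = v'.1.val ∧ v.2.val = v'.2.val) := by
          rcases hsh with h0 | h0 | h0 | h0
          · exact Or.inl ⟨congrArg (fun x => x.1.val) h0, congrArg (fun x => x.2.val) h0⟩
          · exact Or.inr (Or.inl ⟨congrArg (fun x => x.1.val) h0, congrArg (fun x => x.2.val) h0⟩)
          · exact Or.inr (Or.inr (Or.inl ⟨congrArg (fun x => x.1.val) h0, congrArg (fun x => x.2.val) h0⟩))
          · exact Or.inr (Or.inr (Or.inr ⟨congrArg (fun x => x.1.val) h0, congrArg (fun x => x.2.val) h0⟩))
        refine sym2_eq_vals ?_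
        clear * - hsh2 hcol hc1 hc1' hs ht hse hto hrow hu2 hv2 hj hrow' hu2' hv2' hj'
        omega
      · unfold chordsCross at hcr
        have h7 : 3 * t ≤ s * t := Nat.mul_le_mul_right t hs
        rw [← hST] at h7
        have h8 : ST' = ST := by rw [hST', hST]
        clear * - h7 h8 hcr hs ht hse hto hmn hmx hj hmn' hmx' hj'
        omega
    · -- VW vs HD
      refine absurd hcol ?_
      clear * - hc1 hc1'
      omega
    · -- VW vs HW
      refine absurd hcol ?_
      clear * - hc1 hc1'
      omega
  · rcases D' with ⟨k',j',P',hP',hk',hks',hj',hu2',hv2',hrow',hc1',hmn',hmx'⟩ | ⟨k',j',P',hP',hk',hks',hj',hu2',hv2',hrow',hc1',hmn',hmx'⟩ | ⟨j',ST',hST',hj',hu2',hv2',hrow',hc1',hmn',hmx'⟩ | ⟨i',m',P',p',hP',hi',hm',hu1',hv1',hrow',hc1',hp1',hp2',hmn',hmx'⟩ | ⟨i',P',hP',hi',hu1',hv1',hrow',hc1',hmn',hmx'⟩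
    · -- HD vs VD0
      refine absurd hcol ?_
      clear * - hc1 hc1'
      omega
    · -- HD vs VD1
      refine absurd hcol ?_
      clear * - hc1 hc1'
      omega
    · -- HD vs VW
      refine absurd hcol ?_
      clear * - hc1 hc1'
      omega
    · -- HD vs HD
      refine ⟨fun hsh => ?_, fun hcr => ?_⟩
      · have hsh2 : (u.1.val = u'.1.val ∧ u.2.val = u'.2.val) ∨
            (u.1.val = v'.1.val ∧ u.2.val = v'.2.val) ∨
            (v.1.val = u'.1.val ∧ v.2.val = u'.2.val) ∨
            (v.1.val = v'.1.val ∧ v.2.val = v'.2.val) := by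
          rcases hsh with h0 | h0 | h0 | h0
          · exact Or.inl ⟨congrArg (fun x => x.1.val) h0, congrArg (fun x => x.2.val) h0⟩
          · exact Or.inr (Or.inl ⟨congrArg (fun x => x.1.val) h0, congrArg (fun x => x.2.val) h0⟩)
          · exact Or.inr (Or.inr (Or.inl ⟨congrArg (fun x => x.1.val) h0, congrArg (fun x => x.2.val) h0⟩))
          · exact Or.inr (Or.inr (Or.inr ⟨congrArg (fun x => x.1.val) h0, congrArg (fun x => x.2.val) h0⟩))
        refine sym2_eq_vals ?_
        clear * - hsh2 hcol hc1 hc1' hs ht hse hto hrow hu1 hv1 hm hi hrow' hu1' hv1' hm' hi'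
        omega
      · unfold chordsCross at hcr
        clear * - hcr hs ht hmn hmx hp1 hp2 hm hmn' hmx' hp1' hp2' hm'
        omega
    · -- HD vs HW
      refine absurd hcol ?_
      clear * - hc1 hc1'
      omega
  · rcases D' with ⟨k',j',P',hP',hk',hks',hj',hu2',hv2',hrow',hc1',hmn',hmx'⟩ | ⟨k',j',P',hP',hk',hks',hj',hu2',hv2',hrow',hc1',hmn',hmx'⟩ | ⟨j',ST',hST',hj',hu2',hv2',hrow',hc1',hmn',hmx'⟩ | ⟨i',m',P',p',hP',hi',hm',hu1',hv1',hrow',hc1',hp1',hp2',hmn',hmx'⟩ | ⟨i',P',hP',hi',hu1',hv1',hrow',hc1',hmn',hmx'⟩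
    · -- HW vs VD0
      refine absurd hcol ?_
      clear * - hc1 hc1'
      omega
    · -- HW vs VD1
      refine absurd hcol ?_
      clear * - hc1 hc1'
      omega
    · -- HW vs VW
      refine absurd hcol ?_
      clear * - hc1 hc1'
      omega
    · -- HW vs HD
      refine absurd hcol ?_
      clear * - hc1 hc1'
      omega
    · -- HW vs HW
      refine ⟨fun hsh => ?_, fun hcr => ?_⟩
      · have hsh2 : (u.1.val = u'.1.val ∧ u.2.val = u'.2.val) ∨
            (u.1.val = v'.1.val ∧ u.2.val = v'.2.val) ∨
            (v.1.val = u'.1.val ∧ v.2.val = u'.2.val) ∨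
            (v.1.val = v'.1.val ∧ v.2.val = v'.2.val) := by
          rcases hsh with h0 | h0 | h0 | h0
          · exact Or.inl ⟨congrArg (fun x => x.1.val) h0, congrArg (fun x => x.2.val) h0⟩
          · exact Or.inr (Or.inl ⟨congrArg (fun x => x.1.val) h0, congrArg (fun x => x.2.val) h0⟩)
          · exact Or.inr (Or.inr (Or.inl ⟨congrArg (fun x => x.1.val) h0, congrArg (fun x => x.2.val) h0⟩))
          · exact Or.inr (Or.inr (Or.inr ⟨congrArg (fun x => x.1.val) h0, congrArg (fun x => x.2.val) h0⟩))
        refine sym2_eq_vals ?_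
        clear * - hsh2 hcol hc1 hc1' hs ht hse hto hrow hu1 hv1 hi hrow' hu1' hv1' hi'
        omega
      · unfold chordsCross at hcr
        rcases Nat.lt_trichotomy i i' with hl | hl | hl
        · have h1 : (i+1) * t ≤ i' * t := Nat.mul_le_mul_right t (by omega)
          have h3 : (i+1) * t = i * t + 1*t := by ring
          rw [h3, ← hP, ← hP'] at h1
          clear * - h1 hcr hs ht hse hto hmn hmx hi hmn' hmx' hi'
          omega
        · have h4 : P = P' := by rw [hP, hP', hl]
          clear * - h4 hcr hs ht hse hto hmn hmx hi hmn' hmx' hi'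
          omega
        · have h1 : (i'+1) * t ≤ i * t := Nat.mul_le_mul_right t (by omega)
          have h3 : (i'+1) * t = i' * t + 1*t := by ring
          rw [h3, ← hP', ← hP] at h1
          clear * - h1 hcr hs ht hse hto hmn hmx hi hmn' hmx' hi'
          omega

end MBTAux

open MBTAux in
theorem stmt5 (s t : ℕ) (hs : 3 ≤ s) (ht : 3 ≤ t) (hse : Even s) (hto : Odd t) :
    mbt (toroidalGrid s t) ≤ 5 := by
  have hse' : s % 2 = 0 := Nat.even_iff.mp hse
  have hto' : t % 2 = 1 := Nat.odd_iff.mp hto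
  have ht0 : 0 < t := by omega
  have hb : ∀ z : Sym2 (Fin s × Fin t),
      Sym2.lift ⟨coln s t, coln_symm s t⟩ z < 5 := by
    intro z
    induction z using Sym2.ind with
    | _ a b => simpa using coln_lt s t a b
  have hrep : ∀ z : Sym2 (Fin s × Fin t), ∃ a b, z = s(a, b) := by
    intro z
    induction z using Sym2.ind with
    | _ a b => exact ⟨a, b, rfl⟩
  refine Nat.sInf_le (show HasMBE (toroidalGrid s t) 5 from
    ⟨emb s t ht0, fun e => ⟨Sym2.lift ⟨coln s t, coln_symm s t⟩ e.1, hb e.1⟩, ?_, ?_⟩)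
  · rintro e₁ e₂ hne ⟨w, hw1, hw2⟩ heq
    obtain ⟨u, v, huv⟩ := hrep e₁.1
    obtain ⟨u', v', huv'⟩ := hrep e₂.1
    have hadj : (toroidalGrid s t).Adj u v := by
      rw [← SimpleGraph.mem_edgeSet, ← huv]; exact e₁.2
    have hadj' : (toroidalGrid s t).Adj u' v' := by
      rw [← SimpleGraph.mem_edgeSet, ← huv']; exact e₂.2
    have hcolv : coln s t u v = coln s t u' v' := by
      have h5 := congrArg Fin.val heq
      simpa [huv, huv', Sym2.lift_mk] using h5
    have hw1' : w = u ∨ w = v := by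
      have := hw1; rw [show (e₁ : Sym2 (Fin s × Fin t)) = s(u,v) from huv, Sym2.mem_iff] at this
      exact this
    have hw2' : w = u' ∨ w = v' := by
      have := hw2; rw [show (e₂ : Sym2 (Fin s × Fin t)) = s(u',v') from huv', Sym2.mem_iff] at this
      exact this
    have hshare : u = u' ∨ u = v' ∨ v = u' ∨ v = v' := by
      rcases hw1' with rfl | rfl <;> rcases hw2' with h9 | h9 <;> tauto
    have := (main_pair s t hs ht hse' hto' u v u' v' hadj hadj' hcolv).1 hshare
    exact hne (Subtype.ext (huv.trans (this.trans huv'.symm)))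
  · rintro e₁ e₂ ⟨a, b, a', b', h1, h2, hc⟩ heq
    have hadj : (toroidalGrid s t).Adj a b := by
      rw [← SimpleGraph.mem_edgeSet, ← h1]; exact e₁.2
    have hadj' : (toroidalGrid s t).Adj a' b' := by
      rw [← SimpleGraph.mem_edgeSet, ← h2]; exact e₂.2
    have hcolv : coln s t a b = coln s t a' b' := by
      have h5 := congrArg Fin.val heq
      simpa [show (e₁ : Sym2 (Fin s × Fin t)) = s(a,b) from h1,
        show (e₂ : Sym2 (Fin s × Fin t)) = s(a',b') from h2, Sym2.lift_mk] using h5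
    refine (main_pair s t hs ht hse' hto' a b a' b' hadj hadj' hcolv).2 ?_
    simpa [emb_val] using hc
end

section
/- For all odd integers s, t ≥ 3, the toroidal grid T_{s,t} = C_s □ C_t satisfies mbt(T_{s,t}) ≥ 5. -/
open SimpleGraph

/-!
With at most four pages, every vertex of a 4-regular graph sees every colour, so each
colour class is a perfect matching. If `ab` has colour `k`, the `k`-edge at a vertex strictly
between `a` and `b` can neither share an endpoint with `ab` nor cross it, so the colour class `k`
pairs up the vertices strictly between `a` and `b`. Hence their number is even, and adjacent
vertices sit at positions of opposite parity: position mod 2 is a proper 2-colouring. But the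
rows of `T_{s,t}` are odd cycles.
-/

lemma Function.Involutive.even_card_of_forall_ne {α : Type*} [Fintype α] {σ : α → α}
    (hσ : Function.Involutive σ) (hne : ∀ a, σ a ≠ a) : Even (Fintype.card α) := by
  classical
  let g : Function.End α := σ
  have hsq : g ^ 2 ^ 1 = 1 := funext hσ
  have hfix : Fintype.card (Function.fixedPoints g) = 0 :=
    Fintype.card_eq_zero_iff.2 ⟨fun ⟨a, ha⟩ => hne a ha⟩
  have hmod := Equiv.Perm.card_fixedPoints_modEq (p := 2) (n := 1) hsq
  rw [hfix] at hmod
  exact Nat.even_iff.2 hmod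

lemma not_edgesCross_self {V : Type*} (f : V → ℕ) (e : Sym2 V) : ¬ edgesCross f e e := by
  rintro ⟨a, b, c, d, rfl, he, hcross⟩
  rcases Sym2.eq_iff.1 he with ⟨rfl, rfl⟩ | ⟨rfl, rfl⟩ <;>
    · unfold chordsCross at hcross
      omega

lemma hasMBE_card_edgeSet {V : Type*} [Fintype V] (G : SimpleGraph V) [Fintype G.edgeSet] :
    HasMBE G (Fintype.card G.edgeSet) :=
  ⟨Fintype.equivFin V, Fintype.equivFin _,
    fun _ _ hne _ hc => hne ((Fintype.equivFin _).injective hc),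
    fun e _ hcross hc => by
      cases (Fintype.equivFin _).injective hc
      exact not_edgesCross_self _ _ hcross⟩

namespace IsMBE

variable {V : Type*} [Fintype V] {G : SimpleGraph V} {f : V ≃ Fin (Fintype.card V)} {m : ℕ}
  {c : G.edgeSet → Fin m}

lemma eq_of_color_eq (hc : IsMBE G f c) {v w w' : V} (h : G.Adj v w) (h' : G.Adj v w')
    (hcol : c ⟨s(v, w), h⟩ = c ⟨s(v, w'), h'⟩) : w = w' := by
  by_contra hne
  refine hc.1 ⟨s(v, w), h⟩ ⟨s(v, w'), h'⟩ ?_ ⟨v, by simp, by simp⟩ hcol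
  intro he
  rcases Sym2.eq_iff.1 (Subtype.ext_iff.1 he) with ⟨_, hw⟩ | ⟨hv, hw⟩
  · exact hne hw
  · exact G.irrefl (hw ▸ h)

lemma exists_adj_color_eq [DecidableRel G.Adj] (hc : IsMBE G f c) {v : V}
    (hdeg : m ≤ G.degree v) (k : Fin m) : ∃ w, ∃ h : G.Adj v w, c ⟨s(v, w), h⟩ = k := by
  let col : G.neighborSet v → Fin m := fun w => c ⟨s(v, w), w.2⟩
  have hinj : col.Injective := fun w w' hw => Subtype.ext (hc.eq_of_color_eq w.2 w'.2 hw)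
  have hcard : Fintype.card (G.neighborSet v) = Fintype.card (Fin m) :=
    le_antisymm (Fintype.card_le_of_injective col hinj)
      (by rwa [card_neighborSet_eq_degree, Fintype.card_fin])
  obtain ⟨w, hw⟩ := ((Fintype.bijective_iff_injective_and_card col).2 ⟨hinj, hcard⟩).2 k
  exact ⟨w, w.2, hw⟩

lemma between_of_color_eq (hc : IsMBE G f c) {a b u w : V} (hab : G.Adj a b)
    (hau : (f a : ℕ) < f u) (hub : (f u : ℕ) < f b) (huw : G.Adj u w)
    (hcol : c ⟨s(u, w), huw⟩ = c ⟨s(a, b), hab⟩) :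
    (f a : ℕ) < f w ∧ (f w : ℕ) < f b := by
  have hne : (⟨s(a, b), hab⟩ : G.edgeSet) ≠ ⟨s(u, w), huw⟩ := by
    intro he
    rcases Sym2.eq_iff.1 (Subtype.ext_iff.1 he) with ⟨rfl, -⟩ | ⟨-, rfl⟩ <;> omega
  have hwa : w ≠ a := by
    rintro rfl
    exact hc.1 _ _ hne ⟨w, by simp, by simp⟩ hcol.symm
  have hwb : w ≠ b := by
    rintro rfl
    exact hc.1 _ _ hne ⟨w, by simp, by simp⟩ hcol.symm
  have hfwa : (f w : ℕ) ≠ f a := fun h => hwa (f.injective (Fin.val_injective h))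
  have hfwb : (f w : ℕ) ≠ f b := fun h => hwb (f.injective (Fin.val_injective h))
  by_contra hout
  refine hc.2 ⟨s(a, b), hab⟩ ⟨s(u, w), huw⟩ ⟨a, b, u, w, rfl, rfl, ?_⟩ hcol.symm
  simp only [chordsCross]
  omega

lemma val_mod_two_ne_of_lt [DecidableRel G.Adj] (hc : IsMBE G f c)
    (hdeg : ∀ v, m ≤ G.degree v) {a b : V} (hab : G.Adj a b) (hlt : (f a : ℕ) < f b) :
    (f a : ℕ) % 2 ≠ (f b : ℕ) % 2 := by
  let S := {u : V // (f a : ℕ) < f u ∧ (f u : ℕ) < f b}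
  have partner : ∀ u : S, ∃ w : S, ∃ h : G.Adj u.1 w.1,
      c ⟨s(u.1, w.1), h⟩ = c ⟨s(a, b), hab⟩ := by
    rintro ⟨u, hau, hub⟩
    obtain ⟨w, huw, hcol⟩ := hc.exists_adj_color_eq (hdeg u) (c ⟨s(a, b), hab⟩)
    exact ⟨⟨w, hc.between_of_color_eq hab hau hub huw hcol⟩, huw, hcol⟩
  choose σ hσ hσcol using partner
  have hinv : Function.Involutive σ := fun u => by
    have hswap : c ⟨s((σ u).1, u.1), (hσ u).symm⟩ = c ⟨s(u.1, (σ u).1), hσ u⟩ :=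
      congrArg c (Subtype.ext Sym2.eq_swap)
    exact Subtype.ext <| hc.eq_of_color_eq (hσ (σ u)) (hσ u).symm
      (by rw [hσcol, hswap, hσcol])
  have heven := hinv.even_card_of_forall_ne fun u hu => G.irrefl (hu ▸ hσ u)
  have hcard : Fintype.card S = f b - f a - 1 := by
    rw [Fintype.card_congr (f.subtypeEquiv fun _ => Iff.rfl : S ≃ Set.Ioo (f a) (f b)),
      ← Set.toFinset_card, Set.toFinset_Ioo, Fin.card_Ioo]
  rw [hcard, Nat.even_iff] at heven
  omega

lemma colorable_two [DecidableRel G.Adj] (hc : IsMBE G f c) (hdeg : ∀ v, m ≤ G.degree v) :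
    G.Colorable 2 := by
  refine (Coloring.mk (fun v => ((f v : ℕ) : ZMod 2)) fun {a b} hab => ?_).colorable
  rw [Ne, ZMod.natCast_eq_natCast_iff']
  rcases lt_or_gt_of_ne (Fin.val_injective.ne (f.injective.ne hab.ne)) with hlt | hlt
  · exact hc.val_mod_two_ne_of_lt hdeg hab hlt
  · exact (hc.val_mod_two_ne_of_lt hdeg hab.symm hlt).symm

end IsMBE

lemma degree_toroidalGrid (s t : ℕ) (v : Fin (s + 3) × Fin (t + 3))
    [Fintype ((toroidalGrid (s + 3) (t + 3)).neighborSet v)] :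
    (toroidalGrid (s + 3) (t + 3)).degree v = 4 := by
  unfold toroidalGrid at *
  rw [degree_boxProd, cycleGraph_degree_three_le, cycleGraph_degree_three_le]

lemma not_colorable_two_toroidalGrid {s t : ℕ} (hs : 2 ≤ s) (hso : Odd s) (ht : 0 < t) :
    ¬ (toroidalGrid s t).Colorable 2 := by
  intro h
  have hrow := (h.of_hom (boxProdLeft (cycleGraph s) (cycleGraph t) ⟨0, ht⟩).toHom)
    |>.chromaticNumber_le
  rw [chromaticNumber_cycleGraph_of_odd s hs hso] at hrow
  norm_num at hrow

theorem stmt6_general (s t : ℕ) (hs : 3 ≤ s) (ht : 3 ≤ t) (hso : Odd s) :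
    5 ≤ mbt (toroidalGrid s t) := by
  classical
  obtain ⟨s, rfl⟩ : ∃ s', s = s' + 3 := ⟨s - 3, by omega⟩
  obtain ⟨t, rfl⟩ : ∃ t', t = t' + 3 := ⟨t - 3, by omega⟩
  refine le_csInf ⟨_, hasMBE_card_edgeSet _⟩ fun m ⟨f, c, hc⟩ => ?_
  by_contra! hm
  have hdeg : ∀ v, m ≤ (toroidalGrid (s + 3) (t + 3)).degree v := fun v => by
    rw [degree_toroidalGrid]
    omega
  exact not_colorable_two_toroidalGrid (by omega) hso (by omega) (hc.colorable_two hdeg)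

theorem stmt6 (s t : ℕ) (hs : 3 ≤ s) (ht : 3 ≤ t) (hso : Odd s) (hto : Odd t) :
    5 ≤ mbt (toroidalGrid s t) :=
  stmt6_general s t hs ht hso
end

section
/- For all odd integers s, t with s ≥ t ≥ 7, the toroidal grid T_{s,t} = C_s □ C_t satisfies mbt(T_{s,t}) ≤ 5. -/
set_option maxHeartbeats 2000000

open SimpleGraph

namespace MBT


def nxt (n a : ℕ) : ℕ := if a = n - 1 then 0 else a + 1
def posn (s t p q : ℕ) : ℕ :=
  if p = 0 then (s-2)*t + (if q = 0 then 1 else if q % 2 = 1 then 2*q+1 else 2*q)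
  else if p = s-1 then (s-2)*t + (if q = 0 then 0 else if q % 2 = 1 then 2*q else 2*q+1)
  else (p-1)*t + (if p % 2 = 1 then t-1-q else q)
def colCn (s t p a : ℕ) : ℕ :=
  if p = 0 then (if a = 0 then 0 else if a = t-1 then 2 else a % 2)
  else if p = s-1 then (if a = 0 then 3 else if a = t-1 then 2 else a % 2)
  else if a = t-1 then 2 else a % 2
def colRn (s t b q : ℕ) : ℕ :=
  if b = s-1 then (if q = 0 then 4 else if q = t-1 then 0 else 2)
  else if b = s-2 then (if q = 0 then 1 else 4)
  else if b = 0 then (if q = 0 then 1 else 3)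
  else if b % 2 = 0 then 3 else 4

lemma colShape (s t p a : ℕ) (ht : 7 ≤ t) (hst : t ≤ s) (ht2 : t % 2 = 1)
    (hp : p < s) (ha : a < t) :
    (1 ≤ p ∧ p ≤ s-2 ∧ p % 2 = 0 ∧ a ≤ t-2 ∧ colCn s t p a = a % 2 ∧
      posn s t p a = (p-1)*t + a ∧ posn s t p (nxt t a) = (p-1)*t + (a+1) ∧ nxt t a = a+1) ∨
    (1 ≤ p ∧ p ≤ s-2 ∧ p % 2 = 1 ∧ a ≤ t-2 ∧ colCn s t p a = a % 2 ∧
      posn s t p a = (p-1)*t + (t-1-a) ∧ posn s t p (nxt t a) = (p-1)*t + (t-2-a) ∧ nxt t a = a+1) ∨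
    (1 ≤ p ∧ p ≤ s-2 ∧ p % 2 = 1 ∧ a = t-1 ∧ colCn s t p a = 2 ∧
      posn s t p a = (p-1)*t ∧ posn s t p (nxt t a) = (p-1)*t + (t-1) ∧ nxt t a = 0) ∨
    (1 ≤ p ∧ p ≤ s-2 ∧ p % 2 = 0 ∧ a = t-1 ∧ colCn s t p a = 2 ∧
      posn s t p a = (p-1)*t + (t-1) ∧ posn s t p (nxt t a) = (p-1)*t ∧ nxt t a = 0) ∨
    (p = s-1 ∧ a = 0 ∧ colCn s t p a = 3 ∧
      posn s t p a = (s-2)*t ∧ posn s t p (nxt t a) = (s-2)*t + 2 ∧ nxt t a = 1) ∨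
    (p = s-1 ∧ a % 2 = 1 ∧ 1 ≤ a ∧ a ≤ t-2 ∧ colCn s t p a = 1 ∧
      posn s t p a = (s-2)*t + 2*a ∧ posn s t p (nxt t a) = (s-2)*t + (2*a+3) ∧ nxt t a = a+1) ∨
    (p = s-1 ∧ a % 2 = 0 ∧ 2 ≤ a ∧ a ≤ t-3 ∧ colCn s t p a = 0 ∧
      posn s t p a = (s-2)*t + (2*a+1) ∧ posn s t p (nxt t a) = (s-2)*t + (2*a+2) ∧ nxt t a = a+1) ∨
    (p = s-1 ∧ a = t-1 ∧ colCn s t p a = 2 ∧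
      posn s t p a = (s-2)*t + (2*t-1) ∧ posn s t p (nxt t a) = (s-2)*t ∧ nxt t a = 0) ∨
    (p = 0 ∧ a = 0 ∧ colCn s t p a = 0 ∧
      posn s t p a = (s-2)*t + 1 ∧ posn s t p (nxt t a) = (s-2)*t + 3 ∧ nxt t a = 1) ∨
    (p = 0 ∧ a % 2 = 1 ∧ 1 ≤ a ∧ a ≤ t-2 ∧ colCn s t p a = 1 ∧
      posn s t p a = (s-2)*t + (2*a+1) ∧ posn s t p (nxt t a) = (s-2)*t + (2*a+2) ∧ nxt t a = a+1) ∨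
    (p = 0 ∧ a % 2 = 0 ∧ 2 ≤ a ∧ a ≤ t-3 ∧ colCn s t p a = 0 ∧
      posn s t p a = (s-2)*t + 2*a ∧ posn s t p (nxt t a) = (s-2)*t + (2*a+3) ∧ nxt t a = a+1) ∨
    (p = 0 ∧ a = t-1 ∧ colCn s t p a = 2 ∧
      posn s t p a = (s-2)*t + (2*t-2) ∧ posn s t p (nxt t a) = (s-2)*t + 1 ∧ nxt t a = 0) := by
  by_cases hp0 : p = 0
  · by_cases ha0 : a = 0
    · refine .inr (.inr (.inr (.inr (.inr (.inr (.inr (.inr (.inl ⟨hp0, ha0, ?_, ?_, ?_, ?_⟩)))))))) <;>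
        simp only [colCn, posn, nxt] <;> split_ifs <;> first | contradiction | omega
    · by_cases haT : a = t-1
      · refine .inr (.inr (.inr (.inr (.inr (.inr (.inr (.inr (.inr (.inr (.inr
          ⟨hp0, haT, ?_, ?_, ?_, ?_⟩)))))))))) <;>
          simp only [colCn, posn, nxt] <;> split_ifs <;> first | contradiction | omega
      · by_cases hae : a % 2 = 1
        · refine .inr (.inr (.inr (.inr (.inr (.inr (.inr (.inr (.inr (.inl
            ⟨hp0, hae, by omega, by omega, ?_, ?_, ?_, ?_⟩))))))))) <;>
            simp only [colCn, posn, nxt] <;> split_ifs <;> first | contradiction | omega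
        · refine .inr (.inr (.inr (.inr (.inr (.inr (.inr (.inr (.inr (.inr (.inl
            ⟨hp0, by omega, by omega, by omega, ?_, ?_, ?_, ?_⟩)))))))))) <;>
            simp only [colCn, posn, nxt] <;> split_ifs <;> first | contradiction | omega
  · by_cases hpX : p = s-1
    · by_cases ha0 : a = 0
      · refine .inr (.inr (.inr (.inr (.inl ⟨hpX, ha0, ?_, ?_, ?_, ?_⟩)))) <;>
          simp only [colCn, posn, nxt] <;> split_ifs <;> first | contradiction | omega
      · by_cases haT : a = t-1
        · refine .inr (.inr (.inr (.inr (.inr (.inr (.inr (.inl ⟨hpX, haT, ?_, ?_, ?_, ?_⟩))))))) <;>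
            simp only [colCn, posn, nxt] <;> split_ifs <;> first | contradiction | omega
        · by_cases hae : a % 2 = 1
          · refine .inr (.inr (.inr (.inr (.inr (.inl ⟨hpX, hae, by omega, by omega, ?_, ?_, ?_, ?_⟩))))) <;>
              simp only [colCn, posn, nxt] <;> split_ifs <;> first | contradiction | omega
          · refine .inr (.inr (.inr (.inr (.inr (.inr (.inl ⟨hpX, by omega, by omega, by omega, ?_, ?_, ?_, ?_⟩)))))) <;>
              simp only [colCn, posn, nxt] <;> split_ifs <;> first | contradiction | omega
    · by_cases haT : a = t-1
      · by_cases hpe : p % 2 = 1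
        · refine .inr (.inr (.inl ⟨by omega, by omega, hpe, haT, ?_, ?_, ?_, ?_⟩)) <;>
            simp only [colCn, posn, nxt] <;> split_ifs <;> first | contradiction | omega
        · refine .inr (.inr (.inr (.inl ⟨by omega, by omega, by omega, haT, ?_, ?_, ?_, ?_⟩))) <;>
            simp only [colCn, posn, nxt] <;> split_ifs <;> first | contradiction | omega
      · by_cases hpe : p % 2 = 1
        · refine .inr (.inl ⟨by omega, by omega, hpe, by omega, ?_, ?_, ?_, ?_⟩) <;>
            simp only [colCn, posn, nxt] <;> split_ifs <;> first | contradiction | omega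
        · refine .inl ⟨by omega, by omega, by omega, by omega, ?_, ?_, ?_, ?_⟩ <;>
            simp only [colCn, posn, nxt] <;> split_ifs <;> first | contradiction | omega

lemma step {x y : ℕ} (t : ℕ) (h : x + 1 ≤ y) : x*t + t ≤ y*t := by
  have h2 := Nat.mul_le_mul_right t h
  rwa [Nat.succ_mul] at h2
lemma step1 {k : ℕ} (t : ℕ) (h : 1 ≤ k) : t ≤ k*t := by
  have h2 := Nat.mul_le_mul_right t h
  rwa [Nat.one_mul] at h2
lemma noX (a b c d : ℕ)
    (h : max a b ≤ min a b + 1 ∨ max c d ≤ min c d + 1 ∨ max a b ≤ min c d ∨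
      max c d ≤ min a b ∨ (min c d ≤ min a b ∧ max a b ≤ max c d) ∨
      (min a b ≤ min c d ∧ max c d ≤ max a b)) :
    ¬ chordsCross a b c d := by
  unfold chordsCross; omega
lemma rowShape (s t b q : ℕ) (ht : 7 ≤ t) (hst : t ≤ s) (hs2 : s % 2 = 1) (ht2 : t % 2 = 1)
    (hb : b < s) (hq : q < t) :
    (2 ≤ b ∧ b ≤ s-3 ∧ b % 2 = 0 ∧ colRn s t b q = 3 ∧
      posn s t b q = (b-1)*t + q ∧ posn s t (nxt s b) q = b*t + (t-1-q) ∧ nxt s b = b+1) ∨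
    (1 ≤ b ∧ b ≤ s-3 ∧ b % 2 = 1 ∧ colRn s t b q = 4 ∧
      posn s t b q = (b-1)*t + (t-1-q) ∧ posn s t (nxt s b) q = b*t + q ∧ nxt s b = b+1) ∨
    (b = 0 ∧ q = 0 ∧ colRn s t b q = 1 ∧
      posn s t b q = (s-2)*t + 1 ∧ posn s t (nxt s b) q = t-1 ∧ nxt s b = 1) ∨
    (b = 0 ∧ 1 ≤ q ∧ q % 2 = 1 ∧ colRn s t b q = 3 ∧
      posn s t b q = (s-2)*t + (2*q+1) ∧ posn s t (nxt s b) q = t-1-q ∧ nxt s b = 1) ∨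
    (b = 0 ∧ 1 ≤ q ∧ q % 2 = 0 ∧ colRn s t b q = 3 ∧
      posn s t b q = (s-2)*t + 2*q ∧ posn s t (nxt s b) q = t-1-q ∧ nxt s b = 1) ∨
    (b = s-2 ∧ q = 0 ∧ colRn s t b q = 1 ∧
      posn s t b q = (s-3)*t + (t-1) ∧ posn s t (nxt s b) q = (s-2)*t ∧ nxt s b = s-1) ∨
    (b = s-2 ∧ 1 ≤ q ∧ q % 2 = 1 ∧ colRn s t b q = 4 ∧
      posn s t b q = (s-3)*t + (t-1-q) ∧ posn s t (nxt s b) q = (s-2)*t + 2*q ∧ nxt s b = s-1) ∨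
    (b = s-2 ∧ 1 ≤ q ∧ q % 2 = 0 ∧ colRn s t b q = 4 ∧
      posn s t b q = (s-3)*t + (t-1-q) ∧ posn s t (nxt s b) q = (s-2)*t + (2*q+1) ∧ nxt s b = s-1) ∨
    (b = s-1 ∧ q = 0 ∧ colRn s t b q = 4 ∧
      posn s t b q = (s-2)*t ∧ posn s t (nxt s b) q = (s-2)*t + 1 ∧ nxt s b = 0) ∨
    (b = s-1 ∧ 1 ≤ q ∧ q ≤ t-2 ∧ q % 2 = 1 ∧ colRn s t b q = 2 ∧
      posn s t b q = (s-2)*t + 2*q ∧ posn s t (nxt s b) q = (s-2)*t + (2*q+1) ∧ nxt s b = 0) ∨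
    (b = s-1 ∧ 1 ≤ q ∧ q ≤ t-2 ∧ q % 2 = 0 ∧ colRn s t b q = 2 ∧
      posn s t b q = (s-2)*t + (2*q+1) ∧ posn s t (nxt s b) q = (s-2)*t + 2*q ∧ nxt s b = 0) ∨
    (b = s-1 ∧ q = t-1 ∧ colRn s t b q = 0 ∧
      posn s t b q = (s-2)*t + (2*t-1) ∧ posn s t (nxt s b) q = (s-2)*t + (2*t-2) ∧ nxt s b = 0) := by
  have hss : 7 ≤ s := le_trans ht hst
  by_cases hb0 : b = 0
  · subst hb0
    by_cases hq0 : q = 0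
    · refine .inr (.inr (.inl ⟨rfl, hq0, ?_, ?_, ?_, ?_⟩)) <;>
        simp only [colRn, posn, nxt] <;> split_ifs <;> first | contradiction | omega | (simp only [Nat.add_sub_cancel, Nat.sub_self, Nat.sub_sub, Nat.zero_mul, show (2:ℕ)+1=3 from rfl] <;> omega)
    · by_cases hqe : q % 2 = 1
      · refine .inr (.inr (.inr (.inl ⟨rfl, by omega, hqe, ?_, ?_, ?_, ?_⟩))) <;>
          simp only [colRn, posn, nxt] <;> split_ifs <;> first | contradiction | omega | (simp only [Nat.add_sub_cancel, Nat.sub_self, Nat.sub_sub, Nat.zero_mul, show (2:ℕ)+1=3 from rfl] <;> omega)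
      · refine .inr (.inr (.inr (.inr (.inl ⟨rfl, by omega, by omega, ?_, ?_, ?_, ?_⟩)))) <;>
          simp only [colRn, posn, nxt] <;> split_ifs <;> first | contradiction | omega | (simp only [Nat.add_sub_cancel, Nat.sub_self, Nat.sub_sub, Nat.zero_mul, show (2:ℕ)+1=3 from rfl] <;> omega)
  · by_cases hbX : b = s-1
    · subst hbX
      by_cases hq0 : q = 0
      · refine .inr (.inr (.inr (.inr (.inr (.inr (.inr (.inr (.inl ⟨rfl, hq0, ?_, ?_, ?_, ?_⟩)))))))) <;>
          simp only [colRn, posn, nxt] <;> split_ifs <;> first | contradiction | omega | (simp only [Nat.add_sub_cancel, Nat.sub_self, Nat.sub_sub, Nat.zero_mul, show (2:ℕ)+1=3 from rfl] <;> omega)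
      · by_cases hqT : q = t-1
        · refine .inr (.inr (.inr (.inr (.inr (.inr (.inr (.inr (.inr (.inr (.inr
            ⟨rfl, hqT, ?_, ?_, ?_, ?_⟩)))))))))) <;>
            simp only [colRn, posn, nxt] <;> split_ifs <;> first | contradiction | omega | (simp only [Nat.add_sub_cancel, Nat.sub_self, Nat.sub_sub, Nat.zero_mul, show (2:ℕ)+1=3 from rfl] <;> omega)
        · by_cases hqe : q % 2 = 1
          · refine .inr (.inr (.inr (.inr (.inr (.inr (.inr (.inr (.inr (.inl
              ⟨rfl, by omega, by omega, hqe, ?_, ?_, ?_, ?_⟩))))))))) <;>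
              simp only [colRn, posn, nxt] <;> split_ifs <;> first | contradiction | omega | (simp only [Nat.add_sub_cancel, Nat.sub_self, Nat.sub_sub, Nat.zero_mul, show (2:ℕ)+1=3 from rfl] <;> omega)
          · refine .inr (.inr (.inr (.inr (.inr (.inr (.inr (.inr (.inr (.inr (.inl
              ⟨rfl, by omega, by omega, by omega, ?_, ?_, ?_, ?_⟩)))))))))) <;>
              simp only [colRn, posn, nxt] <;> split_ifs <;> first | contradiction | omega | (simp only [Nat.add_sub_cancel, Nat.sub_self, Nat.sub_sub, Nat.zero_mul, show (2:ℕ)+1=3 from rfl] <;> omega)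
    · by_cases hbY : b = s-2
      · subst hbY
        by_cases hq0 : q = 0
        · refine .inr (.inr (.inr (.inr (.inr (.inl ⟨rfl, hq0, ?_, ?_, ?_, ?_⟩))))) <;>
            simp only [colRn, posn, nxt] <;> split_ifs <;> first | contradiction | omega | (simp only [Nat.add_sub_cancel, Nat.sub_self, Nat.sub_sub, Nat.zero_mul, show (2:ℕ)+1=3 from rfl] <;> omega)
        · by_cases hqe : q % 2 = 1
          · refine .inr (.inr (.inr (.inr (.inr (.inr (.inl ⟨rfl, by omega, hqe, ?_, ?_, ?_, ?_⟩)))))) <;>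
              simp only [colRn, posn, nxt] <;> split_ifs <;> first | contradiction | omega | (simp only [Nat.add_sub_cancel, Nat.sub_self, Nat.sub_sub, Nat.zero_mul, show (2:ℕ)+1=3 from rfl] <;> omega)
          · refine .inr (.inr (.inr (.inr (.inr (.inr (.inr (.inl ⟨rfl, by omega, by omega, ?_, ?_, ?_, ?_⟩))))))) <;>
              simp only [colRn, posn, nxt] <;> split_ifs <;> first | contradiction | omega | (simp only [Nat.add_sub_cancel, Nat.sub_self, Nat.sub_sub, Nat.zero_mul, show (2:ℕ)+1=3 from rfl] <;> omega)
      · by_cases hbe : b % 2 = 0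
        · refine .inl ⟨by omega, by omega, hbe, ?_, ?_, ?_, ?_⟩ <;>
            simp only [colRn, posn, nxt] <;> split_ifs <;> first | contradiction | omega | (simp only [Nat.add_sub_cancel, Nat.sub_self, Nat.sub_sub, Nat.zero_mul, show (2:ℕ)+1=3 from rfl] <;> omega)
        · refine .inr (.inl ⟨by omega, by omega, by omega, ?_, ?_, ?_, ?_⟩) <;>
            simp only [colRn, posn, nxt] <;> split_ifs <;> first | contradiction | omega | (simp only [Nat.add_sub_cancel, Nat.sub_self, Nat.sub_sub, Nat.zero_mul, show (2:ℕ)+1=3 from rfl] <;> omega)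

lemma Mcc (s t p a p' a' : ℕ) (ht : 7 ≤ t) (hst : t ≤ s) (hs2 : s % 2 = 1) (ht2 : t % 2 = 1)
    (hp : p < s) (ha : a < t) (hp' : p' < s) (ha' : a' < t)
    (hcol : colCn s t p a = colCn s t p' a') (hne : ¬(p = p' ∧ a = a')) :
    (p = p' → (a ≠ a' ∧ a ≠ nxt t a' ∧ nxt t a ≠ a' ∧ nxt t a ≠ nxt t a')) ∧
    ¬ chordsCross (posn s t p a) (posn s t p (nxt t a)) (posn s t p' a') (posn s t p' (nxt t a')) := by

  have hss : 7 ≤ s := le_trans ht hst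
  have hB : (s-3)*t + t = (s-2)*t := by
    rw [← Nat.succ_mul]; congr 1; omega
  have hB4 : 4*t ≤ (s-3)*t := Nat.mul_le_mul_right t (by omega)
  have hfp : p = 0 ∨ s-1 ≤ p ∨ (p-1)*t + t ≤ (s-2)*t := by
    rcases Nat.lt_or_ge p 1 with h|h
    · left; omega
    rcases Nat.lt_or_ge p (s-1) with h2|h2
    · right; right; exact step t (by omega)
    · right; left; omega
  have hfp' : p' = 0 ∨ s-1 ≤ p' ∨ (p'-1)*t + t ≤ (s-2)*t := by
    rcases Nat.lt_or_ge p' 1 with h|h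
    · left; omega
    rcases Nat.lt_or_ge p' (s-1) with h2|h2
    · right; right; exact step t (by omega)
    · right; left; omega
  have hpp : p' ≤ p ∨ p = 0 ∨ (p-1)*t + t ≤ (p'-1)*t := by
    rcases Nat.lt_or_ge p 1 with h|h
    · right; left; omega
    rcases Nat.lt_or_ge p p' with h2|h2
    · right; right; exact step t (by omega)
    · left; omega
  have hpp2 : p ≤ p' ∨ p' = 0 ∨ (p'-1)*t + t ≤ (p-1)*t := by
    rcases Nat.lt_or_ge p' 1 with h|h
    · right; left; omega
    rcases Nat.lt_or_ge p' p with h2|h2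
    · right; right; exact step t (by omega)
    · left; omega
  have hpeq : p ≠ p' ∨ (p-1)*t = (p'-1)*t := by
    rcases eq_or_ne p p' with h|h
    · right; rw [h]
    · left; exact h
  rcases colShape s t p a ht hst ht2 hp ha with ⟨hr1,hr2,hr3,hr4,hc1,hu1,hv1,hn1⟩|⟨hr1,hr2,hr3,hr4,hc1,hu1,hv1,hn1⟩|⟨hr1,hr2,hr3,hr4,hc1,hu1,hv1,hn1⟩|⟨hr1,hr2,hr3,hr4,hc1,hu1,hv1,hn1⟩|⟨hr1,hr2,hc1,hu1,hv1,hn1⟩|⟨hr1,hr2,hr3,hr4,hc1,hu1,hv1,hn1⟩|⟨hr1,hr2,hr3,hr4,hc1,hu1,hv1,hn1⟩|⟨hr1,hr2,hc1,hu1,hv1,hn1⟩|⟨hr1,hr2,hc1,hu1,hv1,hn1⟩|⟨hr1,hr2,hr3,hr4,hc1,hu1,hv1,hn1⟩|⟨hr1,hr2,hr3,hr4,hc1,hu1,hv1,hn1⟩|⟨hr1,hr2,hc1,hu1,hv1,hn1⟩ <;>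
    rcases colShape s t p' a' ht hst ht2 hp' ha' with ⟨hr1',hr2',hr3',hr4',hc1',hu1',hv1',hn1'⟩|⟨hr1',hr2',hr3',hr4',hc1',hu1',hv1',hn1'⟩|⟨hr1',hr2',hr3',hr4',hc1',hu1',hv1',hn1'⟩|⟨hr1',hr2',hr3',hr4',hc1',hu1',hv1',hn1'⟩|⟨hr1',hr2',hc1',hu1',hv1',hn1'⟩|⟨hr1',hr2',hr3',hr4',hc1',hu1',hv1',hn1'⟩|⟨hr1',hr2',hr3',hr4',hc1',hu1',hv1',hn1'⟩|⟨hr1',hr2',hc1',hu1',hv1',hn1'⟩|⟨hr1',hr2',hc1',hu1',hv1',hn1'⟩|⟨hr1',hr2',hr3',hr4',hc1',hu1',hv1',hn1'⟩|⟨hr1',hr2',hr3',hr4',hc1',hu1',hv1',hn1'⟩|⟨hr1',hr2',hc1',hu1',hv1',hn1'⟩ <;>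
  (first
    | exact absurd hcol (by omega)
    | exact ⟨by omega, noX _ _ _ _ (by rw [hu1, hv1, hu1', hv1']; omega)⟩)

lemma Mcr (s t p a b q : ℕ) (ht : 7 ≤ t) (hst : t ≤ s) (hs2 : s % 2 = 1) (ht2 : t % 2 = 1)
    (hp : p < s) (ha : a < t) (hb : b < s) (hq : q < t)
    (hcol : colCn s t p a = colRn s t b q) :
    (¬((p = b ∨ p = nxt s b) ∧ (a = q ∨ nxt t a = q))) ∧
    ¬ chordsCross (posn s t p a) (posn s t p (nxt t a)) (posn s t b q) (posn s t (nxt s b) q) := by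

  have hss : 7 ≤ s := le_trans ht hst
  have hB : (s-3)*t + t = (s-2)*t := by
    rw [← Nat.succ_mul]; congr 1; omega
  have hB4 : 4*t ≤ (s-3)*t := Nat.mul_le_mul_right t (by omega)
  have hfb2 : (b-1)*t + t = b*t ∨ b = 0 := by
    rcases Nat.lt_or_ge b 1 with h|h
    · right; omega
    · left; rw [← Nat.succ_mul]; congr 1; omega
  have hfbs3 : s-4 < b ∨ b*t + t ≤ (s-3)*t := by
    rcases Nat.lt_or_ge (s-4) b with h|h
    · left; omega
    · right; exact step t (by omega)
  have hfbB : s-3 < b ∨ b*t + t ≤ (s-2)*t := by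
    rcases Nat.lt_or_ge (s-3) b with h|h
    · left; omega
    · right; exact step t (by omega)
  have htb : b ≤ 1 ∨ t ≤ (b-1)*t := by
    rcases Nat.lt_or_ge b 2 with h|h
    · left; omega
    · right; exact step1 t (by omega)
  rcases colShape s t p a ht hst ht2 hp ha with ⟨hr1,hr2,hr3,hr4,hc1,hu1,hv1,hn1⟩|⟨hr1,hr2,hr3,hr4,hc1,hu1,hv1,hn1⟩|⟨hr1,hr2,hr3,hr4,hc1,hu1,hv1,hn1⟩|⟨hr1,hr2,hr3,hr4,hc1,hu1,hv1,hn1⟩|⟨hr1,hr2,hc1,hu1,hv1,hn1⟩|⟨hr1,hr2,hr3,hr4,hc1,hu1,hv1,hn1⟩|⟨hr1,hr2,hr3,hr4,hc1,hu1,hv1,hn1⟩|⟨hr1,hr2,hc1,hu1,hv1,hn1⟩|⟨hr1,hr2,hc1,hu1,hv1,hn1⟩|⟨hr1,hr2,hr3,hr4,hc1,hu1,hv1,hn1⟩|⟨hr1,hr2,hr3,hr4,hc1,hu1,hv1,hn1⟩|⟨hr1,hr2,hc1,hu1,hv1,hn1⟩ <;>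
    rcases rowShape s t b q ht hst hs2 ht2 hb hq with ⟨hr1',hr2',hr3',hc1',hu1',hv1',hn1'⟩|⟨hr1',hr2',hr3',hc1',hu1',hv1',hn1'⟩|⟨hr1',hr2',hc1',hu1',hv1',hn1'⟩|⟨hr1',hr2',hr3',hc1',hu1',hv1',hn1'⟩|⟨hr1',hr2',hr3',hc1',hu1',hv1',hn1'⟩|⟨hr1',hr2',hc1',hu1',hv1',hn1'⟩|⟨hr1',hr2',hr3',hc1',hu1',hv1',hn1'⟩|⟨hr1',hr2',hr3',hc1',hu1',hv1',hn1'⟩|⟨hr1',hr2',hc1',hu1',hv1',hn1'⟩|⟨hr1',hr2',hr3',hr4',hc1',hu1',hv1',hn1'⟩|⟨hr1',hr2',hr3',hr4',hc1',hu1',hv1',hn1'⟩|⟨hr1',hr2',hc1',hu1',hv1',hn1'⟩ <;>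
  (first
    | exact absurd hcol (by omega)
    | exact ⟨by omega, noX _ _ _ _ (by rw [hu1, hv1, hu1', hv1']; omega)⟩)

lemma Mrr (s t b q b' q' : ℕ) (ht : 7 ≤ t) (hst : t ≤ s) (hs2 : s % 2 = 1) (ht2 : t % 2 = 1)
    (hb : b < s) (hq : q < t) (hb' : b' < s) (hq' : q' < t)
    (hcol : colRn s t b q = colRn s t b' q') (hne : ¬(b = b' ∧ q = q')) :
    (q = q' → (b ≠ b' ∧ b ≠ nxt s b' ∧ nxt s b ≠ b' ∧ nxt s b ≠ nxt s b')) ∧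
    ¬ chordsCross (posn s t b q) (posn s t (nxt s b) q) (posn s t b' q') (posn s t (nxt s b') q') := by

  have hss : 7 ≤ s := le_trans ht hst
  have hB : (s-3)*t + t = (s-2)*t := by
    rw [← Nat.succ_mul]; congr 1; omega
  have hB4 : 4*t ≤ (s-3)*t := Nat.mul_le_mul_right t (by omega)
  have hfb2 : (b-1)*t + t = b*t ∨ b = 0 := by
    rcases Nat.lt_or_ge b 1 with h|h
    · right; omega
    · left; rw [← Nat.succ_mul]; congr 1; omega
  have hfbs3 : s-4 < b ∨ b*t + t ≤ (s-3)*t := by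
    rcases Nat.lt_or_ge (s-4) b with h|h
    · left; omega
    · right; exact step t (by omega)
  have hfbB : s-3 < b ∨ b*t + t ≤ (s-2)*t := by
    rcases Nat.lt_or_ge (s-3) b with h|h
    · left; omega
    · right; exact step t (by omega)
  have htb : b ≤ 1 ∨ t ≤ (b-1)*t := by
    rcases Nat.lt_or_ge b 2 with h|h
    · left; omega
    · right; exact step1 t (by omega)
  have hfb2' : (b'-1)*t + t = b'*t ∨ b' = 0 := by
    rcases Nat.lt_or_ge b' 1 with h|h
    · right; omega
    · left; rw [← Nat.succ_mul]; congr 1; omega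
  have hfbs3' : s-4 < b' ∨ b'*t + t ≤ (s-3)*t := by
    rcases Nat.lt_or_ge (s-4) b' with h|h
    · left; omega
    · right; exact step t (by omega)
  have hfbB' : s-3 < b' ∨ b'*t + t ≤ (s-2)*t := by
    rcases Nat.lt_or_ge (s-3) b' with h|h
    · left; omega
    · right; exact step t (by omega)
  have htb' : b' ≤ 1 ∨ t ≤ (b'-1)*t := by
    rcases Nat.lt_or_ge b' 2 with h|h
    · left; omega
    · right; exact step1 t (by omega)
  have hbb : b' ≤ b+1 ∨ b*t + t ≤ (b'-1)*t := by
    rcases Nat.lt_or_ge (b+1) b' with h|h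
    · right; exact step t (by omega)
    · left; omega
  have hbb2 : b ≤ b'+1 ∨ b'*t + t ≤ (b-1)*t := by
    rcases Nat.lt_or_ge (b'+1) b with h|h
    · right; exact step t (by omega)
    · left; omega
  have hbeq : b ≠ b' ∨ ((b-1)*t = (b'-1)*t ∧ b*t = b'*t) := by
    rcases eq_or_ne b b' with h|h
    · right; rw [h]; exact ⟨rfl, rfl⟩
    · left; exact h
  rcases rowShape s t b q ht hst hs2 ht2 hb hq with ⟨hr1,hr2,hr3,hc1,hu1,hv1,hn1⟩|⟨hr1,hr2,hr3,hc1,hu1,hv1,hn1⟩|⟨hr1,hr2,hc1,hu1,hv1,hn1⟩|⟨hr1,hr2,hr3,hc1,hu1,hv1,hn1⟩|⟨hr1,hr2,hr3,hc1,hu1,hv1,hn1⟩|⟨hr1,hr2,hc1,hu1,hv1,hn1⟩|⟨hr1,hr2,hr3,hc1,hu1,hv1,hn1⟩|⟨hr1,hr2,hr3,hc1,hu1,hv1,hn1⟩|⟨hr1,hr2,hc1,hu1,hv1,hn1⟩|⟨hr1,hr2,hr3,hr4,hc1,hu1,hv1,hn1⟩|⟨hr1,hr2,hr3,hr4,hc1,hu1,hv1,hn1⟩|⟨hr1,hr2,hc1,hu1,hv1,hn1⟩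 <;>
    rcases rowShape s t b' q' ht hst hs2 ht2 hb' hq' with ⟨hr1',hr2',hr3',hc1',hu1',hv1',hn1'⟩|⟨hr1',hr2',hr3',hc1',hu1',hv1',hn1'⟩|⟨hr1',hr2',hc1',hu1',hv1',hn1'⟩|⟨hr1',hr2',hr3',hc1',hu1',hv1',hn1'⟩|⟨hr1',hr2',hr3',hc1',hu1',hv1',hn1'⟩|⟨hr1',hr2',hc1',hu1',hv1',hn1'⟩|⟨hr1',hr2',hr3',hc1',hu1',hv1',hn1'⟩|⟨hr1',hr2',hr3',hc1',hu1',hv1',hn1'⟩|⟨hr1',hr2',hc1',hu1',hv1',hn1'⟩|⟨hr1',hr2',hr3',hr4',hc1',hu1',hv1',hn1'⟩|⟨hr1',hr2',hr3',hr4',hc1',hu1',hv1',hn1'⟩|⟨hr1',hr2',hc1',hu1',hv1',hn1'⟩ <;>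
  (first
    | exact absurd hcol (by omega)
    | exact ⟨by omega, noX _ _ _ _ (by rw [hu1, hv1, hu1', hv1']; omega)⟩)


lemma nxt_lt (n a : ℕ) (h : a < n) (h7 : 7 ≤ n) : nxt n a < n := by unfold nxt; split <;> omega

lemma colC_lt (s t p a : ℕ) : colCn s t p a < 5 := by unfold colCn; split_ifs <;> omega

lemma colR_lt (s t b q : ℕ) : colRn s t b q < 5 := by unfold colRn; split_ifs <;> omega

lemma posn_lt (s t p q : ℕ) (ht : 7 ≤ t) (hst : t ≤ s) (hp : p < s) (hq : q < t) :
    posn s t p q < s * t := by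
  have hB : (s-2)*t + 2*t = s*t := by rw [← Nat.add_mul]; congr 1; omega
  have hfp : p = 0 ∨ s-1 ≤ p ∨ (p-1)*t + t ≤ (s-2)*t := by
    rcases Nat.lt_or_ge p 1 with h|h
    · left; omega
    rcases Nat.lt_or_ge p (s-1) with h2|h2
    · right; right; exact step t (by omega)
    · right; left; omega
  unfold posn; split_ifs <;> omega

lemma posInj (s t p q p' q' : ℕ) (ht : 7 ≤ t) (hst : t ≤ s)
    (hp : p < s) (hq : q < t) (hp' : p' < s) (hq' : q' < t)
    (h : posn s t p q = posn s t p' q') : p = p' ∧ q = q' := by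
  have hss : 7 ≤ s := le_trans ht hst
  have hfp : p = 0 ∨ s-1 ≤ p ∨ (p-1)*t + t ≤ (s-2)*t := by
    rcases Nat.lt_or_ge p 1 with h1|h1
    · left; omega
    rcases Nat.lt_or_ge p (s-1) with h2|h2
    · right; right; exact step t (by omega)
    · right; left; omega
  have hfp' : p' = 0 ∨ s-1 ≤ p' ∨ (p'-1)*t + t ≤ (s-2)*t := by
    rcases Nat.lt_or_ge p' 1 with h1|h1
    · left; omega
    rcases Nat.lt_or_ge p' (s-1) with h2|h2
    · right; right; exact step t (by omega)
    · right; left; omega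
  have hpp : p' ≤ p ∨ p = 0 ∨ (p-1)*t + t ≤ (p'-1)*t := by
    rcases Nat.lt_or_ge p 1 with h1|h1
    · right; left; omega
    rcases Nat.lt_or_ge p p' with h2|h2
    · right; right; exact step t (by omega)
    · left; omega
  have hpp2 : p ≤ p' ∨ p' = 0 ∨ (p'-1)*t + t ≤ (p-1)*t := by
    rcases Nat.lt_or_ge p' 1 with h1|h1
    · right; left; omega
    rcases Nat.lt_or_ge p' p with h2|h2
    · right; right; exact step t (by omega)
    · left; omega
  have hpeq : p ≠ p' ∨ (p-1)*t = (p'-1)*t := by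
    rcases eq_or_ne p p' with h1|h1
    · right; rw [h1]
    · left; exact h1
  unfold posn at h; split_ifs at h <;> omega

lemma subNext (n : ℕ) (hn : 7 ≤ n) (x y : Fin n) (h : (y - x).val = 1) :
    y.val = nxt n x.val := by
  have hd : (y - x).val = (n - x.val + y.val) % n := by rw [Fin.sub_def]
  rw [hd] at h
  have hx := x.isLt
  have hy := y.isLt
  rcases le_or_gt x.val y.val with hle | hlt
  · have e1 : n - x.val + y.val = (y.val - x.val) + n := by omega
    rw [e1, Nat.add_mod_right, Nat.mod_eq_of_lt (by omega)] at h
    unfold nxt; split_ifs <;> omega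
  · rw [Nat.mod_eq_of_lt (by omega)] at h
    unfold nxt; split_ifs <;> omega

def aIdx (x y : ℕ) : ℕ := if y = x+1 then x else if x = y+1 then y else max x y

lemma aIdx_comm (x y : ℕ) : aIdx x y = aIdx y x := by unfold aIdx; split_ifs <;> omega

lemma aIdx_next (n a : ℕ) (hn : 7 ≤ n) (ha : a < n) : aIdx a (nxt n a) = a := by
  unfold aIdx nxt; split_ifs <;> omega

def rawc (s t : ℕ) (u v : Fin s × Fin t) : ℕ :=
  if u.1.val = v.1.val then colCn s t u.1.val (aIdx u.2.val v.2.val)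
  else colRn s t (aIdx u.1.val v.1.val) (min u.2.val v.2.val)

lemma rawc_comm (s t : ℕ) (u v : Fin s × Fin t) : rawc s t u v = rawc s t v u := by
  unfold rawc
  split_ifs with h1 h2 h2
  · rw [h1, aIdx_comm]
  · exact absurd h1.symm h2
  · exact absurd h2.symm h1
  · rw [aIdx_comm, Nat.min_comm]

def colSym (s t : ℕ) : Sym2 (Fin s × Fin t) → ℕ :=
  Sym2.lift ⟨rawc s t, rawc_comm s t⟩

lemma colSym_col (s t p a : ℕ) (ht : 7 ≤ t) (hp : p < s) (ha : a < t) (h2 : nxt t a < t) :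
    colSym s t s((⟨p,hp⟩, ⟨a,ha⟩), (⟨p,hp⟩, ⟨nxt t a, h2⟩)) = colCn s t p a := by
  show rawc s t _ _ = _
  unfold rawc
  rw [if_pos rfl]
  show colCn s t p (aIdx a (nxt t a)) = colCn s t p a
  rw [aIdx_next t a ht ha]

lemma colSym_row (s t b q : ℕ) (hs : 7 ≤ s) (hb : b < s) (hq : q < t) (h2 : nxt s b < s) :
    colSym s t s((⟨b,hb⟩, ⟨q,hq⟩), (⟨nxt s b, h2⟩, ⟨q,hq⟩)) = colRn s t b q := by
  show rawc s t _ _ = _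
  unfold rawc
  rw [if_neg (by show ¬ b = nxt s b; unfold nxt; split_ifs <;> omega)]
  show colRn s t (aIdx b (nxt s b)) (min q q) = colRn s t b q
  rw [aIdx_next s b hs hb, Nat.min_self]

lemma classify (s t : ℕ) (ht : 7 ≤ t) (hst : t ≤ s) (e : Sym2 (Fin s × Fin t))
    (he : e ∈ (toroidalGrid s t).edgeSet) :
    (∃ (p a : ℕ) (hp : p < s) (ha : a < t) (h2 : nxt t a < t),
       e = s(((⟨p,hp⟩, ⟨a,ha⟩) : Fin s × Fin t), (⟨p,hp⟩, ⟨nxt t a, h2⟩)))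
    ∨ (∃ (b q : ℕ) (hb : b < s) (hq : q < t) (h2 : nxt s b < s),
       e = s(((⟨b,hb⟩, ⟨q,hq⟩) : Fin s × Fin t), (⟨nxt s b, h2⟩, ⟨q,hq⟩))) := by
  have hss : 7 ≤ s := le_trans ht hst
  induction e using Sym2.ind with
  | _ u v =>
    rw [mem_edgeSet] at he
    have he' : (cycleGraph s).Adj u.1 v.1 ∧ u.2 = v.2 ∨ (cycleGraph t).Adj u.2 v.2 ∧ u.1 = v.1 := by
      rwa [toroidalGrid, boxProd_adj] at he
    rcases he' with ⟨hadj, heq⟩ | ⟨hadj, heq⟩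
    · rw [cycleGraph_adj'] at hadj
      rcases hadj with h1 | h1
      · right
        refine ⟨v.1.val, v.2.val, v.1.isLt, v.2.isLt, nxt_lt s v.1.val v.1.isLt hss, ?_⟩
        have hu : u = (⟨nxt s v.1.val, nxt_lt s v.1.val v.1.isLt hss⟩, v.2) :=
          Prod.ext (Fin.ext (subNext s hss v.1 u.1 h1)) heq
        rw [hu, Sym2.eq_swap]
      · right
        refine ⟨u.1.val, u.2.val, u.1.isLt, u.2.isLt, nxt_lt s u.1.val u.1.isLt hss, ?_⟩
        have hv : v = (⟨nxt s u.1.val, nxt_lt s u.1.val u.1.isLt hss⟩, u.2) :=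
          Prod.ext (Fin.ext (subNext s hss u.1 v.1 h1)) heq.symm
        rw [hv]
    · rw [cycleGraph_adj'] at hadj
      rcases hadj with h1 | h1
      · left
        refine ⟨v.1.val, v.2.val, v.1.isLt, v.2.isLt, nxt_lt t v.2.val v.2.isLt ht, ?_⟩
        have hu : u = (v.1, ⟨nxt t v.2.val, nxt_lt t v.2.val v.2.isLt ht⟩) :=
          Prod.ext heq (Fin.ext (subNext t ht v.2 u.2 h1))
        rw [hu, Sym2.eq_swap]
      · left
        refine ⟨u.1.val, u.2.val, u.1.isLt, u.2.isLt, nxt_lt t u.2.val u.2.isLt ht, ?_⟩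
        have hv : v = (u.1, ⟨nxt t u.2.val, nxt_lt t u.2.val u.2.isLt ht⟩) :=
          Prod.ext heq.symm (Fin.ext (subNext t ht u.2 v.2 h1))
        rw [hv]

lemma crossOfEdgesCross {α : Type*} (f : α → ℕ) (u v x y : α)
    (h : edgesCross f s(u,v) s(x,y)) : chordsCross (f u) (f v) (f x) (f y) := by
  obtain ⟨a, b, c, d, h1, h2, hc⟩ := h
  rcases Sym2.eq_iff.mp h1 with ⟨rfl, rfl⟩ | ⟨rfl, rfl⟩ <;>
    rcases Sym2.eq_iff.mp h2 with ⟨rfl, rfl⟩ | ⟨rfl, rfl⟩ <;>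
    · unfold chordsCross at hc ⊢; omega

lemma chordsCross_comm (a b c d : ℕ) : chordsCross a b c d ↔ chordsCross c d a b := by
  unfold chordsCross; omega

end MBT

theorem stmt7 (s t : ℕ) (hso : Odd s) (hto : Odd t) (ht : 7 ≤ t) (hst : t ≤ s) :
    mbt (toroidalGrid s t) ≤ 5 := by
  have hs2 : s % 2 = 1 := Nat.odd_iff.mp hso
  have ht2 : t % 2 = 1 := Nat.odd_iff.mp hto
  have hss : 7 ≤ s := le_trans ht hst
  apply Nat.sInf_le
  show HasMBE (toroidalGrid s t) 5
  have hcard : Fintype.card (Fin s × Fin t) = s * t := by simp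
  let g : (Fin s × Fin t) → Fin (Fintype.card (Fin s × Fin t)) :=
    fun v => ⟨MBT.posn s t v.1.val v.2.val, by
      rw [hcard]; exact MBT.posn_lt s t v.1.val v.2.val ht hst v.1.isLt v.2.isLt⟩
  have hginj : Function.Injective g := by
    intro u v huv
    have h1 : MBT.posn s t u.1.val u.2.val = MBT.posn s t v.1.val v.2.val :=
      congrArg Fin.val huv
    obtain ⟨hpe, hqe⟩ := MBT.posInj s t _ _ _ _ ht hst u.1.isLt u.2.isLt v.1.isLt v.2.isLt h1
    exact Prod.ext (Fin.ext hpe) (Fin.ext hqe)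
  have hgbij : Function.Bijective g :=
    (Fintype.bijective_iff_injective_and_card g).2 ⟨hginj, by simp⟩
  refine ⟨Equiv.ofBijective g hgbij,
    fun e => ⟨MBT.colSym s t e.val % 5, Nat.mod_lt _ (by norm_num)⟩, ?_, ?_⟩
  · -- properness
    intro e1 e2 hne hshare hCeq
    have hneval : (e1 : Sym2 (Fin s × Fin t)) ≠ (e2 : Sym2 (Fin s × Fin t)) :=
      fun hh => hne (Subtype.ext hh)
    have hv5 : MBT.colSym s t (e1 : Sym2 (Fin s × Fin t)) % 5
        = MBT.colSym s t (e2 : Sym2 (Fin s × Fin t)) % 5 := congrArg Fin.val hCeq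
    obtain ⟨v, hv1, hv2⟩ := hshare
    rcases MBT.classify s t ht hst e1.val e1.prop with
      ⟨p, a, hp, ha, h2, hrep⟩ | ⟨b, q, hb, hq, h2, hrep⟩ <;>
      rcases MBT.classify s t ht hst e2.val e2.prop with
        ⟨p', a', hp', ha', h2', hrep'⟩ | ⟨b', q', hb', hq', h2', hrep'⟩
    · rw [hrep, MBT.colSym_col s t p a ht hp ha h2,
        hrep', MBT.colSym_col s t p' a' ht hp' ha' h2',
        Nat.mod_eq_of_lt (MBT.colC_lt s t p a), Nat.mod_eq_of_lt (MBT.colC_lt s t p' a')] at hv5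
      have hnd : ¬(p = p' ∧ a = a') := by
        rintro ⟨h3, h4⟩
        subst h3; subst h4
        exact hneval (hrep.trans hrep'.symm)
      obtain ⟨hvert, -⟩ := MBT.Mcc s t p a p' a' ht hst hs2 ht2 hp ha hp' ha' hv5 hnd
      rw [hrep] at hv1; rw [hrep'] at hv2
      rcases Sym2.mem_iff.mp hv1 with rfl | rfl <;>
        rcases Sym2.mem_iff.mp hv2 with hv | hv <;>
        simp only [Prod.mk.injEq, Fin.mk.injEq] at hv <;> omega
    · rw [hrep, MBT.colSym_col s t p a ht hp ha h2,
        hrep', MBT.colSym_row s t b' q' hss hb' hq' h2',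
        Nat.mod_eq_of_lt (MBT.colC_lt s t p a), Nat.mod_eq_of_lt (MBT.colR_lt s t b' q')] at hv5
      obtain ⟨hvert, -⟩ := MBT.Mcr s t p a b' q' ht hst hs2 ht2 hp ha hb' hq' hv5
      rw [hrep] at hv1; rw [hrep'] at hv2
      rcases Sym2.mem_iff.mp hv1 with rfl | rfl <;>
        rcases Sym2.mem_iff.mp hv2 with hv | hv <;>
        simp only [Prod.mk.injEq, Fin.mk.injEq] at hv <;>
        exact hvert (by omega)
    · rw [hrep, MBT.colSym_row s t b q hss hb hq h2,
        hrep', MBT.colSym_col s t p' a' ht hp' ha' h2',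
        Nat.mod_eq_of_lt (MBT.colR_lt s t b q), Nat.mod_eq_of_lt (MBT.colC_lt s t p' a')] at hv5
      obtain ⟨hvert, -⟩ := MBT.Mcr s t p' a' b q ht hst hs2 ht2 hp' ha' hb hq hv5.symm
      rw [hrep] at hv1; rw [hrep'] at hv2
      rcases Sym2.mem_iff.mp hv1 with rfl | rfl <;>
        rcases Sym2.mem_iff.mp hv2 with hv | hv <;>
        simp only [Prod.mk.injEq, Fin.mk.injEq] at hv <;>
        exact hvert (by omega)
    · rw [hrep, MBT.colSym_row s t b q hss hb hq h2,
        hrep', MBT.colSym_row s t b' q' hss hb' hq' h2',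
        Nat.mod_eq_of_lt (MBT.colR_lt s t b q), Nat.mod_eq_of_lt (MBT.colR_lt s t b' q')] at hv5
      have hnd : ¬(b = b' ∧ q = q') := by
        rintro ⟨h3, h4⟩
        subst h3; subst h4
        exact hneval (hrep.trans hrep'.symm)
      obtain ⟨hvert, -⟩ := MBT.Mrr s t b q b' q' ht hst hs2 ht2 hb hq hb' hq' hv5 hnd
      rw [hrep] at hv1; rw [hrep'] at hv2
      rcases Sym2.mem_iff.mp hv1 with rfl | rfl <;>
        rcases Sym2.mem_iff.mp hv2 with hv | hv <;>
        simp only [Prod.mk.injEq, Fin.mk.injEq] at hv <;> omega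
  · -- crossing
    intro e1 e2 hX hCeq
    have hv5 : MBT.colSym s t (e1 : Sym2 (Fin s × Fin t)) % 5
        = MBT.colSym s t (e2 : Sym2 (Fin s × Fin t)) % 5 := congrArg Fin.val hCeq
    by_cases heq : e1 = e2
    · subst heq
      rcases MBT.classify s t ht hst e1.val e1.prop with
        ⟨p, a, hp, ha, h2, hrep⟩ | ⟨b, q, hb, hq, h2, hrep⟩ <;>
      · rw [hrep] at hX
        have hc := MBT.crossOfEdgesCross _ _ _ _ _ hX
        unfold chordsCross at hc
        omega
    · have hneval : (e1 : Sym2 (Fin s × Fin t)) ≠ (e2 : Sym2 (Fin s × Fin t)) :=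
        fun hh => heq (Subtype.ext hh)
      rcases MBT.classify s t ht hst e1.val e1.prop with
        ⟨p, a, hp, ha, h2, hrep⟩ | ⟨b, q, hb, hq, h2, hrep⟩ <;>
        rcases MBT.classify s t ht hst e2.val e2.prop with
          ⟨p', a', hp', ha', h2', hrep'⟩ | ⟨b', q', hb', hq', h2', hrep'⟩
      · rw [hrep, MBT.colSym_col s t p a ht hp ha h2,
          hrep', MBT.colSym_col s t p' a' ht hp' ha' h2',
          Nat.mod_eq_of_lt (MBT.colC_lt s t p a), Nat.mod_eq_of_lt (MBT.colC_lt s t p' a')] at hv5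
        have hnd : ¬(p = p' ∧ a = a') := by
          rintro ⟨h3, h4⟩
          subst h3; subst h4
          exact hneval (hrep.trans hrep'.symm)
        obtain ⟨-, hncross⟩ := MBT.Mcc s t p a p' a' ht hst hs2 ht2 hp ha hp' ha' hv5 hnd
        rw [hrep, hrep'] at hX
        exact hncross (MBT.crossOfEdgesCross _ _ _ _ _ hX)
      · rw [hrep, MBT.colSym_col s t p a ht hp ha h2,
          hrep', MBT.colSym_row s t b' q' hss hb' hq' h2',
          Nat.mod_eq_of_lt (MBT.colC_lt s t p a), Nat.mod_eq_of_lt (MBT.colR_lt s t b' q')] at hv5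
        obtain ⟨-, hncross⟩ := MBT.Mcr s t p a b' q' ht hst hs2 ht2 hp ha hb' hq' hv5
        rw [hrep, hrep'] at hX
        exact hncross (MBT.crossOfEdgesCross _ _ _ _ _ hX)
      · rw [hrep, MBT.colSym_row s t b q hss hb hq h2,
          hrep', MBT.colSym_col s t p' a' ht hp' ha' h2',
          Nat.mod_eq_of_lt (MBT.colR_lt s t b q), Nat.mod_eq_of_lt (MBT.colC_lt s t p' a')] at hv5
        obtain ⟨-, hncross⟩ := MBT.Mcr s t p' a' b q ht hst hs2 ht2 hp' ha' hb hq hv5.symm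
        rw [hrep, hrep'] at hX
        exact hncross ((MBT.chordsCross_comm _ _ _ _).mp (MBT.crossOfEdgesCross _ _ _ _ _ hX))
      · rw [hrep, MBT.colSym_row s t b q hss hb hq h2,
          hrep', MBT.colSym_row s t b' q' hss hb' hq' h2',
          Nat.mod_eq_of_lt (MBT.colR_lt s t b q), Nat.mod_eq_of_lt (MBT.colR_lt s t b' q')] at hv5
        have hnd : ¬(b = b' ∧ q = q') := by
          rintro ⟨h3, h4⟩
          subst h3; subst h4
          exact hneval (hrep.trans hrep'.symm)
        obtain ⟨-, hncross⟩ := MBT.Mrr s t b q b' q' ht hst hs2 ht2 hb hq hb' hq' hv5 hnd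
        rw [hrep, hrep'] at hX
        exact hncross (MBT.crossOfEdgesCross _ _ _ _ _ hX)
end
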